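/- arXiv:1609.05988 — 14 statements merged into one kernel-verified Lean document; each statement's English description precedes it below -/
import Mathlib

section
/- Let C be a commutative ring containing the rational numbers and let R(t) be a formal power series over C. Then there exists a unique formal power series f(x) over C with zero constant term satisfying f(x) = x·R(f(x)) (the composition R(f) being well-defined since f has zero constant term). -/
/-!
The map `T f = X · R(f)` is an `X`-adic contraction: the coefficients of `R(f)` below `xⁿ` only
depend on those of `f` below `xⁿ`, so the coefficients of `T f` below `xⁿ⁺¹` do. Hence the Picard
iterates `Tⁿ(0)` stabilise coefficientwise and converge to a fixed point, and two fixed points agree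
to every order by induction. A fixed point of `T` is automatically divisible by `X`.
-/

open PowerSeries

/-- Composition `φ(f)` of formal power series, which is the correct notion of
substitution of `f` into `φ` whenever `f` has zero constant term (in that case
`f ^ n` has order at least `n`, so the coefficient of `x^m` in `φ(f) = ∑ₙ φₙ fⁿ`
only receives contributions from `n ≤ m`). -/
noncomputable def psComp {A : Type*} [CommRing A] (φ f : PowerSeries A) : PowerSeries A :=
  PowerSeries.mk fun m => ∑ n ∈ Finset.range (m + 1), coeff n φ * coeff m (f ^ n)

namespace PowerSeries

variable {A : Type*} [CommSemiring A]

theorem coeff_eq_of_trunc_eq {n m : ℕ} {f g : A⟦X⟧} (h : trunc n f = trunc n g) (hm : m < n) :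
    coeff m f = coeff m g := by
  simpa [coeff_trunc, hm] using congrArg (Polynomial.coeff · m) h

theorem eq_of_forall_trunc_eq {f g : A⟦X⟧} (h : ∀ n, trunc n f = trunc n g) : f = g :=
  ext fun m => coeff_eq_of_trunc_eq (h (m + 1)) m.lt_succ_self

theorem trunc_pow_eq_of_trunc_eq {n : ℕ} {f g : A⟦X⟧} (h : trunc n f = trunc n g) (k : ℕ) :
    trunc n (f ^ k) = trunc n (g ^ k) := by
  rw [← trunc_trunc_pow, h, trunc_trunc_pow]

theorem trunc_succ_X_mul_eq_of_trunc_eq {n : ℕ} {f g : A⟦X⟧} (h : trunc n f = trunc n g) :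
    trunc (n + 1) (X * f) = trunc (n + 1) (X * g) := by
  ext m
  cases m with
  | zero => simp [coeff_trunc]
  | succ m =>
    simp only [coeff_trunc, coeff_succ_X_mul, Nat.succ_lt_succ_iff]
    split_ifs with hm
    · exact coeff_eq_of_trunc_eq h hm
    · rfl

theorem trunc_eq_of_trunc_succ_eq {F : ℕ → A⟦X⟧}
    (hF : ∀ n, trunc n (F n) = trunc n (F (n + 1))) {n m : ℕ} (hnm : n ≤ m) :
    trunc n (F n) = trunc n (F m) := by
  induction m, hnm using Nat.le_induction with
  | base => rfl
  | succ m hnm ih =>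
    rw [ih, ← trunc_trunc_of_le (F m) hnm, hF m, trunc_trunc_of_le _ hnm]

theorem exists_trunc_eq_of_trunc_succ_eq {F : ℕ → A⟦X⟧}
    (hF : ∀ n, trunc n (F n) = trunc n (F (n + 1))) :
    ∃ f : A⟦X⟧, ∀ n, trunc n f = trunc n (F n) := by
  refine ⟨mk fun i => coeff i (F (i + 1)), fun n => ?_⟩
  ext i
  rw [coeff_trunc, coeff_trunc]
  split_ifs with hi
  · rw [coeff_mk]
    exact coeff_eq_of_trunc_eq (trunc_eq_of_trunc_succ_eq hF hi) i.lt_succ_self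
  · rfl

def TruncContracting (T : A⟦X⟧ → A⟦X⟧) : Prop :=
  ∀ n f g, trunc n f = trunc n g → trunc (n + 1) (T f) = trunc (n + 1) (T g)

theorem TruncContracting.existsUnique_fixedPoint {T : A⟦X⟧ → A⟦X⟧} (hT : TruncContracting T) :
    ∃! f, T f = f := by
  have hiterate : ∀ n, trunc n (T^[n] 0) = trunc n (T^[n + 1] 0) := by
    intro n
    induction n with
    | zero => rfl
    | succ n ih =>
      rw [Function.iterate_succ_apply' T n, Function.iterate_succ_apply' T (n + 1)]
      exact hT n _ _ ih
  obtain ⟨f, hf⟩ := exists_trunc_eq_of_trunc_succ_eq hiterate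
  have hfix : T f = f := eq_of_forall_trunc_eq fun n => by
    cases n with
    | zero => rfl
    | succ n => rw [hT n _ _ (hf n), ← Function.iterate_succ_apply' T n, hf]
  refine ⟨f, hfix, fun g hg => eq_of_forall_trunc_eq fun n => ?_⟩
  induction n with
  | zero => rfl
  | succ n ih => rw [← hg, ← hfix]; exact hT n _ _ ih

end PowerSeries

theorem trunc_psComp_eq_of_trunc_eq {A : Type*} [CommRing A] (φ : A⟦X⟧) {n : ℕ} {f g : A⟦X⟧}
    (h : trunc n f = trunc n g) : trunc n (psComp φ f) = trunc n (psComp φ g) := by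
  ext m
  rw [coeff_trunc, coeff_trunc]
  split_ifs with hm
  · simp only [psComp, coeff_mk]
    refine Finset.sum_congr rfl fun k _ => ?_
    rw [coeff_eq_of_trunc_eq (trunc_pow_eq_of_trunc_eq h k) hm]
  · rfl

theorem truncContracting_X_mul_psComp {A : Type*} [CommRing A] (φ : A⟦X⟧) :
    TruncContracting fun f => X * psComp φ f :=
  fun _ _ _ h => trunc_succ_X_mul_eq_of_trunc_eq (trunc_psComp_eq_of_trunc_eq φ h)

theorem exists_unique_lagrange_solution_general (C : Type*) [CommRing C]
    (R : PowerSeries C) :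
    ∃! f : PowerSeries C, constantCoeff f = 0 ∧ f = X * psComp R f := by
  obtain ⟨f, hf, huniq⟩ := (truncContracting_X_mul_psComp R).existsUnique_fixedPoint
  refine ⟨f, ⟨?_, hf.symm⟩, fun g hg => huniq g hg.2.symm⟩
  rw [← hf]
  simp

/-- Let `C` be a commutative ring containing the rationals and `R(t)` a formal power
series over `C`.  Then there is a unique formal power series `f` with zero constant
term satisfying `f = X · R(f)`. -/
theorem exists_unique_lagrange_solution (C : Type*) [CommRing C] [Algebra ℚ C]
    (R : PowerSeries C) :
    ∃! f : PowerSeries C, constantCoeff f = 0 ∧ f = X * psComp R f :=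
  exists_unique_lagrange_solution_general C R
end

section
/- Let C be a commutative ring containing the rational numbers, let R(t) be a formal power series over C, and let f be the unique formal power series with zero constant term satisfying f = x·R(f). Then for every formal power series ψ(t) over C and every integer n ≥ 0, [x^n] ( ψ(f) · (1 − x·R'(f))^{-1} ) = [t^n] ( ψ(t)·R(t)^n ), where the power series 1 − x·R'(f) has constant term 1 and hence is invertible in C[[x]]. -/
/-!
Write `W = R(f)`, so that `f = X·W`, and `G = (1 - X·R'(f))⁻¹`. Expanding `ψ(f) = ∑ ψₖ Xᵏ Wᵏ`
reduces the theorem to `[xᵐ](Wᵏ·G) = [tᵐ] R^(m+k)` for all `m, k`. Both sides satisfy the same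
recursion, which decreases `m + k`: `W^(k+1)·G = R(f)·(Wᵏ·G)` expands as
`∑ Rⱼ Xʲ W^(j+k) G`, matching `R^(m+k+1) = R·R^(m+k)`, and `G = 1 + X·R'(f)·G` expands as
`1 + ∑ R'ⱼ X^(j+1) Wʲ G`, matching `(m+1)·[t^(m+1)] R^(m+1) = (m+1)·[tᵐ](R'·Rᵐ)`.
-/

open PowerSeries

namespace PowerSeries

open Finset

variable {C : Type*} [CommRing C]

lemma coeff_mul_eq_sum_range (a b : C⟦X⟧) (m : ℕ) :
    coeff m (a * b) = ∑ j ∈ range (m + 1), coeff j a * coeff (m - j) b :=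
  coeff_mul m a b ▸ Nat.sum_antidiagonal_eq_sum_range_succ (fun i j => coeff i a * coeff j b) m

lemma coeff_psComp_eq_sum_range_of_le {f W : C⟦X⟧} (hf : f = X * W) (φ : C⟦X⟧)
    {i m : ℕ} (him : i ≤ m) :
    coeff i (psComp φ f) = ∑ j ∈ range (m + 1), coeff j φ * coeff i (f ^ j) := by
  rw [psComp, coeff_mk]
  refine sum_subset (range_subset_range.2 (by omega)) fun j hjm hji => ?_
  simp only [mem_range] at hjm hji
  rw [hf, mul_pow, coeff_X_pow_mul', if_neg (by omega), mul_zero]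

lemma coeff_psComp_mul_of_eq_X_mul {f W : C⟦X⟧} (hf : f = X * W) (φ T : C⟦X⟧) (m : ℕ) :
    coeff m (psComp φ f * T) =
      ∑ j ∈ range (m + 1), coeff j φ * coeff (m - j) (W ^ j * T) := by
  calc coeff m (psComp φ f * T)
      = ∑ p ∈ antidiagonal m, ∑ j ∈ range (m + 1),
          coeff j φ * (coeff p.1 (f ^ j) * coeff p.2 T) := by
        rw [coeff_mul]
        refine sum_congr rfl fun p hp => ?_
        rw [coeff_psComp_eq_sum_range_of_le hf φ (HasAntidiagonal.antidiagonal.fst_le hp), sum_mul]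
        simp only [mul_assoc]
    _ = ∑ j ∈ range (m + 1), coeff j φ * coeff m (X ^ j * (W ^ j * T)) := by
        rw [sum_comm]
        refine sum_congr rfl fun j _ => ?_
        rw [← mul_sum, ← coeff_mul, hf, mul_pow, mul_assoc]
    _ = _ := by
        refine sum_congr rfl fun j hj => ?_
        rw [coeff_X_pow_mul', if_pos (by simp only [mem_range] at hj; omega)]

lemma coeff_succ_invOfUnit_one_sub_X_mul (A : C⟦X⟧) (m : ℕ) :
    coeff (m + 1) (invOfUnit (1 - X * A) 1) = coeff m (A * invOfUnit (1 - X * A) 1) := by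
  have h : invOfUnit (1 - X * A) 1 = 1 + X * (A * invOfUnit (1 - X * A) 1) := by
    linear_combination mul_invOfUnit (1 - X * A) 1 (by simp)
  conv_lhs => rw [h, map_add, coeff_succ_X_mul, coeff_one, if_neg m.succ_ne_zero, zero_add]

lemma coeff_succ_pow_succ [IsAddTorsionFree C] (R : C⟦X⟧) (m : ℕ) :
    coeff (m + 1) (R ^ (m + 1)) = coeff m (d⁄dX C R * R ^ m) := by
  have h := coeff_derivative (R ^ (m + 1)) m
  rw [derivative_pow, Nat.add_sub_cancel, mul_assoc, ← nsmul_eq_mul, map_nsmul,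
    mul_comm (R ^ m)] at h
  refine nsmul_right_injective (Nat.succ_ne_zero m) (?_ : (m + 1) • _ = (m + 1) • _)
  rw [h, nsmul_eq_mul, Nat.cast_succ, mul_comm]

theorem coeff_psComp_pow_mul_invOfUnit [IsAddTorsionFree C] {R f : C⟦X⟧}
    (hf : f = X * psComp R f) (m k : ℕ) :
    coeff m (psComp R f ^ k * invOfUnit (1 - X * psComp (d⁄dX C R) f) 1) =
      coeff m (R ^ (m + k)) := by
  set W := psComp R f
  set G := invOfUnit (1 - X * psComp (d⁄dX C R) f) 1 with hG
  induction hN : m + k using Nat.strong_induction_on generalizing m k with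
  | _ N ih =>
    subst hN
    replace ih : ∀ m' k', m' + k' < m + k → coeff m' (W ^ k' * G) = coeff m' (R ^ (m' + k')) :=
      fun m' k' hlt => ih _ hlt m' k' rfl
    cases k with
    | succ k =>
      calc coeff m (W ^ (k + 1) * G)
          = ∑ j ∈ range (m + 1), coeff j R * coeff (m - j) (W ^ j * (W ^ k * G)) := by
            rw [pow_succ', mul_assoc, coeff_psComp_mul_of_eq_X_mul hf]
        _ = ∑ j ∈ range (m + 1), coeff j R * coeff (m - j) (R ^ (m + k)) := by
            refine sum_congr rfl fun j hj => ?_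
            simp only [mem_range] at hj
            rw [← mul_assoc, ← pow_add, ih _ _ (by omega), show m - j + (j + k) = m + k by omega]
        _ = coeff m (R ^ (m + (k + 1))) := by
            rw [← coeff_mul_eq_sum_range, ← add_assoc, pow_succ']
    | zero =>
      cases m with
      | zero => simp [hG]
      | succ m =>
        calc coeff (m + 1) (W ^ 0 * G)
            = coeff m (psComp (d⁄dX C R) f * G) := by
              rw [pow_zero, one_mul, hG, coeff_succ_invOfUnit_one_sub_X_mul]
          _ = ∑ j ∈ range (m + 1), coeff j (d⁄dX C R) * coeff (m - j) (R ^ m) := by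
              rw [coeff_psComp_mul_of_eq_X_mul hf]
              refine sum_congr rfl fun j hj => ?_
              simp only [mem_range] at hj
              rw [ih _ _ (by omega), Nat.sub_add_cancel (by omega)]
          _ = coeff (m + 1) (R ^ (m + 1 + 0)) := by
              rw [← coeff_mul_eq_sum_range, coeff_succ_pow_succ]

end PowerSeries

theorem lagrange_inversion_diagonal_form_general (C : Type*) [CommRing C] [Algebra ℚ C]
    (R f : PowerSeries C) (hf : f = X * psComp R f)
    (ψ : PowerSeries C) (n : ℕ) :
    coeff n (psComp ψ f * invOfUnit (1 - X * psComp (d⁄dX C R) f) 1) =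
      coeff n (ψ * R ^ n) := by
  have := IsAddTorsionFree.of_module_rat C
  rw [coeff_psComp_mul_of_eq_X_mul hf, coeff_mul_eq_sum_range]
  refine Finset.sum_congr rfl fun k hk => ?_
  rw [coeff_psComp_pow_mul_invOfUnit hf, Nat.sub_add_cancel (Finset.mem_range_succ_iff.1 hk)]

/-- Lagrange inversion, form (1d): if `f = X·R(f)` with `f` of zero constant term, then
for any power series `ψ` and `n ≥ 0`,
`[xⁿ] ( ψ(f)·(1 − X·R'(f))⁻¹ ) = [tⁿ] ( ψ(t)·R(t)ⁿ )`.
Here `1 − X·R'(f)` has constant term `1`, so it is invertible, its inverse being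
`invOfUnit _ 1`. -/
theorem lagrange_inversion_diagonal_form (C : Type*) [CommRing C] [Algebra ℚ C]
    (R f : PowerSeries C) (hf0 : constantCoeff f = 0) (hf : f = X * psComp R f)
    (ψ : PowerSeries C) (n : ℕ) :
    coeff n (psComp ψ f * invOfUnit (1 - X * psComp (d⁄dX C R) f) 1) =
      coeff n (ψ * R ^ n) :=
  lagrange_inversion_diagonal_form_general C R f hf ψ n
end

section
/- (Schur–Jabotinsky theorem.) Let K be a field of characteristic zero, let f(x) = c₁x + c₂x² + ⋯ be a formal power series over K with c₁ ≠ 0, and let g = f^{⟨−1⟩} be its compositional inverse, so g(f(x)) = f(g(x)) = x. Regard f and g as elements of the field of formal Laurent series K((x)), so that all integer powers f^k and g^k are defined. Then for all integers k and all integers n ≠ 0, n·[x^n](f^k) = k·[x^{−k}](g^{−n}), where [x^m] denotes the coefficient of x^m in a Laurent series. -/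
/-!
Write `f = X u` and `g = X v` with `u, v` units of `K⟦X⟧`, so that `[X^n] f^k = [X^(n-k)] u^k`
and `[X^(-k)] g^(-n) = [X^(n-k)] v^(-n)`; both vanish when `n < k`. Since `g ∘ f = X` says
`v(X u) = u⁻¹`, we get `v^j(X u) = u^(-j)` for every integer `j`. With `n = k + m`, expanding
`u^(k-1) (X u)' = u^(-(m+1)) (X u)' · v^(-n)(X u)` in powers of `X u` and reading off the
coefficient of `X^m`, only the term `(X u)^m` survives: the coefficient of `X^s` in
`u^(-(s+1)) (X u)'` is the residue of `f^(-(s+1)) f'`, which vanishes for `s ≥ 1` because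
`s · u^(-(s+1)) (X u)' = s · u^(-s) - X (u^(-s))'`. Hence `[X^m] v^(-n) = [X^m] u^(k-1) (X u)'`,
and `k · u^(k-1) (X u)' = k u^k + X (u^k)'` turns this into `k [X^m] v^(-n) = n [X^m] u^k`.
-/

open PowerSeries

theorem Derivation.leibniz_val_zpow {R A : Type*} [CommSemiring R] [CommRing A] [Algebra R A]
    (D : Derivation R A A) (u : Aˣ) (k : ℤ) :
    D ↑(u ^ k) = k * ↑(u ^ (k - 1)) * D ↑u := by
  have hu : (u : A) * ↑u⁻¹ = 1 := u.mul_inv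
  have hDinv : ↑u * D ↑u⁻¹ + ↑u⁻¹ * D ↑u = 0 := by
    rw [← smul_eq_mul, ← smul_eq_mul, ← D.leibniz, u.mul_inv, D.map_one_eq_zero]
  induction k using Int.induction_on with
  | zero => simp
  | succ k ih =>
    simp only [zpow_add_one, zpow_sub_one, add_sub_cancel_right, Units.val_mul] at ih ⊢
    rw [D.leibniz, ih, smul_eq_mul, smul_eq_mul]
    push_cast
    linear_combination (↑(u ^ k) * D ↑u * k) * hu
  | pred k ih =>
    simp only [zpow_sub_one, Units.val_mul] at ih ⊢
    rw [D.leibniz, ih, smul_eq_mul, smul_eq_mul]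
    push_cast
    linear_combination (↑(u ^ (-(k : ℤ))) * ↑u⁻¹) * hDinv - (↑(u ^ (-(k : ℤ))) * D ↑u⁻¹) * hu

section

open Finset

variable {R : Type*} [CommRing R] {a : R⟦X⟧}

theorem PowerSeries.coeff_mul_X_mul_pow_of_lt (Q u : R⟦X⟧) {m r : ℕ} (h : m < r) :
    coeff m (Q * (X * u) ^ r) = 0 := by
  rw [mul_pow, mul_left_comm, coeff_X_pow_mul', if_neg (by omega)]

theorem psComp_eq_subst (φ : R⟦X⟧) (ha : constantCoeff a = 0) : psComp φ a = φ.subst a := by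
  obtain ⟨u, rfl⟩ := X_dvd_iff.mpr ha
  ext m
  rw [psComp, coeff_mk, coeff_subst' (HasSubst.of_constantCoeff_zero' ha),
    finsum_eq_sum_of_support_subset _ (s := range (m + 1))]
  · simp only [smul_eq_mul]
  · intro r hr
    by_contra hrm
    have h0 := coeff_mul_X_mul_pow_of_lt 1 u (show m < r by simpa using hrm)
    rw [one_mul] at h0
    simp [h0] at hr

theorem PowerSeries.coeff_mul_subst (ha : constantCoeff a = 0) (φ Q : R⟦X⟧) (m : ℕ) :
    coeff m (Q * φ.subst a) = ∑ r ∈ range (m + 1), coeff r φ * coeff m (Q * a ^ r) := by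
  have hs := HasSubst.of_constantCoeff_zero' ha
  obtain ⟨u, rfl⟩ := X_dvd_iff.mpr ha
  conv_lhs => rw [eq_X_pow_mul_shift_add_trunc (m + 1) φ]
  rw [subst_add hs, subst_mul hs, subst_pow hs, subst_X hs, subst_coe hs,
    Polynomial.aeval_eq_sum_range' (natDegree_trunc_lt _ _), mul_add, ← mul_assoc, mul_right_comm,
    map_add, coeff_mul_X_mul_pow_of_lt _ u (Nat.lt_succ_self m), zero_add, mul_sum, map_sum]
  refine sum_congr rfl fun r hr => ?_
  rw [coeff_trunc, if_pos (mem_range.mp hr), mul_smul_comm, map_smul, smul_eq_mul]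

theorem PowerSeries.constantCoeff_subst_of_constantCoeff_eq_zero (ha : constantCoeff a = 0)
    (φ : R⟦X⟧) : constantCoeff (φ.subst a) = constantCoeff φ := by
  simpa using coeff_mul_subst ha φ 1 0

theorem PowerSeries.val_zpow_subst_of_mul_subst_eq_one (ha : constantCoeff a = 0)
    {u v : R⟦X⟧ˣ} (h : ↑u * (v : R⟦X⟧).subst a = 1) (j : ℤ) :
    (↑(v ^ j) : R⟦X⟧).subst a = ↑(u ^ (-j)) := by
  let σ : R⟦X⟧ →* R⟦X⟧ :=
    (substAlgHom (R := R) (HasSubst.of_constantCoeff_zero' ha) : R⟦X⟧ →ₐ[R] R⟦X⟧)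
  have hσ (φ : R⟦X⟧) : σ φ = φ.subst a := by simp [σ, coe_substAlgHom]
  have hv : Units.map σ v = u⁻¹ := by
    ext
    rw [Units.coe_map, Units.inv_eq_of_mul_eq_one_right h, hσ]
  rw [← hσ, ← Units.coe_map, map_zpow, hv, inv_zpow, zpow_neg]

theorem PowerSeries.coeff_X_mul_derivative (φ : R⟦X⟧) (n : ℕ) :
    coeff n (X * d⁄dX R φ) = n * coeff n φ := by
  cases n with
  | zero => simp
  | succ n => rw [coeff_succ_X_mul, coeff_derivative, mul_comm, Nat.cast_succ]

theorem PowerSeries.coeff_zpow_neg_succ_mul_derivative_X_mul [IsAddTorsionFree R] (u : R⟦X⟧ˣ)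
    (s : ℕ) :
    coeff s (((u ^ (-(s + 1 : ℤ)) : R⟦X⟧ˣ) : R⟦X⟧) * d⁄dX R (X * (u : R⟦X⟧))) =
      if s = 0 then 1 else 0 := by
  have hmul : ((u ^ (-(s + 1 : ℤ)) : R⟦X⟧ˣ) : R⟦X⟧) * u = ((u ^ (-(s : ℤ)) : R⟦X⟧ˣ) : R⟦X⟧) := by
    rw [← Units.val_mul, ← zpow_add_one, neg_add, neg_add_cancel_right]
  have hscaled : (s : R⟦X⟧) * (((u ^ (-(s + 1 : ℤ)) : R⟦X⟧ˣ) : R⟦X⟧) * d⁄dX R (X * (u : R⟦X⟧))) =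
      (s : R⟦X⟧) * ((u ^ (-(s : ℤ)) : R⟦X⟧ˣ) : R⟦X⟧) -
        X * d⁄dX R ((u ^ (-(s : ℤ)) : R⟦X⟧ˣ) : R⟦X⟧) := by
    rw [Derivation.leibniz_val_zpow, Derivation.leibniz, derivative_X, smul_eq_mul, smul_eq_mul,
      show -(s : ℤ) - 1 = -(s + 1) by ring, ← hmul]
    push_cast
    ring
  rcases Nat.eq_zero_or_pos s with rfl | hs
  · simp [mul_add, ← Units.val_mul]
  · rw [if_neg hs.ne']
    have := congrArg (coeff s) hscaled
    rw [map_sub, coeff_X_mul_derivative, ← map_natCast (C (R := R)), coeff_C_mul, coeff_C_mul,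
      sub_self] at this
    exact nsmul_right_injective hs.ne' (by simpa [nsmul_eq_mul] using this)

theorem PowerSeries.coeff_zpow_pred_mul_derivative_X_mul (u : R⟦X⟧ˣ) (k : ℤ) (m : ℕ) :
    k * coeff m (((u ^ (k - 1) : R⟦X⟧ˣ) : R⟦X⟧) * d⁄dX R (X * (u : R⟦X⟧))) =
      (k + m) * coeff m ((u ^ k : R⟦X⟧ˣ) : R⟦X⟧) := by
  have hmul : ((u ^ (k - 1) : R⟦X⟧ˣ) : R⟦X⟧) * u = ((u ^ k : R⟦X⟧ˣ) : R⟦X⟧) := by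
    rw [← Units.val_mul, ← zpow_add_one, sub_add_cancel]
  have hscaled : (k : R⟦X⟧) * (((u ^ (k - 1) : R⟦X⟧ˣ) : R⟦X⟧) * d⁄dX R (X * (u : R⟦X⟧))) =
      (k : R⟦X⟧) * ((u ^ k : R⟦X⟧ˣ) : R⟦X⟧) + X * d⁄dX R ((u ^ k : R⟦X⟧ˣ) : R⟦X⟧) := by
    rw [Derivation.leibniz_val_zpow, Derivation.leibniz, derivative_X, smul_eq_mul, smul_eq_mul,
      ← hmul]
    ring
  have := congrArg (coeff m) hscaled
  rw [map_add, coeff_X_mul_derivative, ← map_intCast (C (R := R)), coeff_C_mul,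
    coeff_C_mul] at this
  rw [this]
  ring

theorem PowerSeries.coeff_zpow_eq_of_mul_subst_eq_one [IsAddTorsionFree R] {u v : R⟦X⟧ˣ}
    (h : (u : R⟦X⟧) * (v : R⟦X⟧).subst (X * (u : R⟦X⟧)) = 1) (k : ℤ) (m : ℕ) :
    coeff m ((v ^ (-(k + m)) : R⟦X⟧ˣ) : R⟦X⟧) =
      coeff m (((u ^ (k - 1) : R⟦X⟧ˣ) : R⟦X⟧) * d⁄dX R (X * (u : R⟦X⟧))) := by
  have ha : constantCoeff (X * (u : R⟦X⟧)) = 0 := by simp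
  set Q := ((u ^ (-(m + 1 : ℤ)) : R⟦X⟧ˣ) : R⟦X⟧) * d⁄dX R (X * (u : R⟦X⟧))
  have hsplit : ((u ^ (k - 1) : R⟦X⟧ˣ) : R⟦X⟧) * d⁄dX R (X * (u : R⟦X⟧)) =
      Q * ((v ^ (-(k + m)) : R⟦X⟧ˣ) : R⟦X⟧).subst (X * (u : R⟦X⟧)) := by
    rw [val_zpow_subst_of_mul_subst_eq_one ha h, neg_neg, mul_right_comm, ← Units.val_mul,
      ← zpow_add]
    congr 3
    ring
  have hterm : ∀ r ≤ m, coeff m (Q * (X * (u : R⟦X⟧)) ^ r) = if r = m then 1 else 0 := by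
    intro r hr
    obtain ⟨s, rfl⟩ := Nat.exists_eq_add_of_le hr
    have hpow : ((u ^ (-((r + s : ℕ) + 1 : ℤ)) : R⟦X⟧ˣ) : R⟦X⟧) * (u : R⟦X⟧) ^ r =
        ((u ^ (-(s + 1 : ℤ)) : R⟦X⟧ˣ) : R⟦X⟧) := by
      rw [← Units.val_pow_eq_pow_val, ← zpow_natCast, ← Units.val_mul, ← zpow_add]
      congr 2
      push_cast
      ring
    have hQ : Q * (X * (u : R⟦X⟧)) ^ r =
        X ^ r * (((u ^ (-(s + 1 : ℤ)) : R⟦X⟧ˣ) : R⟦X⟧) * d⁄dX R (X * (u : R⟦X⟧))) := by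
      linear_combination (X ^ r * d⁄dX R (X * (u : R⟦X⟧))) * hpow
    rw [hQ, coeff_X_pow_mul', if_pos (Nat.le_add_right r s), Nat.add_sub_cancel_left,
      coeff_zpow_neg_succ_mul_derivative_X_mul]
    simp
  rw [hsplit, coeff_mul_subst ha, sum_congr rfl fun r hr =>
    by rw [hterm r (Nat.lt_succ_iff.mp (mem_range.mp hr))]]
  simp

end

open LaurentSeries in
theorem PowerSeries.coeff_coe_X_mul_zpow {K : Type*} [Field K] (u : K⟦X⟧ˣ) (k n : ℤ) :
    (((X * (u : K⟦X⟧) : K⟦X⟧) : K⸨X⸩) ^ k).coeff n =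
      (((u ^ k : K⟦X⟧ˣ) : K⟦X⟧) : K⸨X⸩).coeff (n - k) := by
  have hu : (((u ^ k : K⟦X⟧ˣ) : K⟦X⟧) : K⸨X⸩) = ((u : K⟦X⟧) : K⸨X⸩) ^ k :=
    map_zpow ((HahnSeries.ofPowerSeries ℤ K : K⟦X⟧ →* K⸨X⸩).comp (Units.coeHom _)) u k
  rw [coe_mul, coe_X, mul_zpow, ← RatFunc.single_zpow, ← hu, HahnSeries.coeff_single_mul, one_mul]

theorem schur_jabotinsky_general (K : Type*) [Field K] [CharZero K] (f g : PowerSeries K)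
    (hf0 : constantCoeff f = 0)
    (hg0 : constantCoeff g = 0)
    (hgf : psComp g f = X)
    (k n : ℤ) :
    (n : K) * (((f : LaurentSeries K)) ^ k).coeff n =
      (k : K) * (((g : LaurentSeries K)) ^ (-n)).coeff (-k) := by
  obtain ⟨u, rfl⟩ := X_dvd_iff.mpr hf0
  obtain ⟨v, rfl⟩ := X_dvd_iff.mpr hg0
  have hs := HasSubst.of_constantCoeff_zero' hf0
  have huv : u * v.subst (X * u) = 1 := by
    have hgf' : (X * v).subst (X * u) = X := by rw [← psComp_eq_subst _ hf0, hgf]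
    rw [subst_mul hs, subst_X hs] at hgf'
    apply X_mul_cancel
    rw [mul_one, ← mul_assoc, hgf']
  have hv : IsUnit v := by
    rw [isUnit_iff_constantCoeff, ← constantCoeff_subst_of_constantCoeff_eq_zero hf0]
    exact (IsUnit.of_mul_eq_one_right _ huv).map _
  obtain ⟨U, rfl⟩ := IsUnit.of_mul_eq_one _ huv
  obtain ⟨V, rfl⟩ := hv
  rw [coeff_coe_X_mul_zpow, coeff_coe_X_mul_zpow, show -k - -n = n - k by ring, coeff_coe,
    coeff_coe]
  split_ifs with hnk
  · simp
  obtain ⟨m, rfl⟩ : ∃ m : ℕ, n = k + m := ⟨(n - k).toNat, by omega⟩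
  rw [add_sub_cancel_left, Int.natAbs_natCast, coeff_zpow_eq_of_mul_subst_eq_one huv,
    coeff_zpow_pred_mul_derivative_X_mul]
  push_cast
  ring

/-- The Schur–Jabotinsky theorem: if `f = c₁x + c₂x² + ⋯` with `c₁ ≠ 0` and `g` is its
compositional inverse (`g(f(x)) = f(g(x)) = x`), then regarding `f` and `g` as nonzero
elements of the field of formal Laurent series `K((x))`, for all integers `k` and all
integers `n ≠ 0` we have `n·[xⁿ](f^k) = k·[x^{−k}](g^{−n})`. -/
theorem schur_jabotinsky (K : Type*) [Field K] [CharZero K] (f g : PowerSeries K)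
    (hf0 : constantCoeff f = 0) (hf1 : coeff 1 f ≠ 0)
    (hg0 : constantCoeff g = 0)
    (hgf : psComp g f = X) (hfg : psComp f g = X)
    (k n : ℤ) (hn : n ≠ 0) :
    (n : K) * (((f : LaurentSeries K)) ^ k).coeff n =
      (k : K) * (((g : LaurentSeries K)) ^ (-n)).coeff (-k) :=
  schur_jabotinsky_general K f g hf0 hg0 hgf k n
end

section
/- (Jacobi's change of variables formula for residues.) Let K be a field of characteristic zero, let f(x) be a formal Laurent series over K, and let g(x) = g₁x + g₂x² + ⋯ be a formal power series with zero constant term and g₁ ≠ 0. Then res f(x) = res ( f(g(x))·g'(x) ), where f(g(x)) denotes the formal Laurent series obtained by substituting g into f (well-defined since g has order 1), g' is the formal derivative of g, and the residue res h of a Laurent series h is its coefficient of x^{−1}. -/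
/-!
Write `g = X * u` with `u` a unit. For `n ≥ 0`, `gⁿ * g'` is a power series, so its residue
vanishes. For `n = -(m + 1)`, the residue of `gⁿ * g'` is the `m`-th coefficient of
`u⁻¹ ^ (m + 1) * (X * u)' = u⁻¹ ^ m + X * u⁻¹ ^ (m + 1) * u'`. Since
`X * (u⁻¹ ^ m)' = -m * X * u⁻¹ ^ (m + 1) * u'` and the `m`-th coefficient of `X * h'` is
`m * hₘ`, the two terms cancel unless `m = 0`. Thus `res (gⁿ * g') = δ_{n,-1}` and the sum
collapses to `f₋₁`.
-/

open PowerSeries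

namespace PowerSeries

theorem coeff_X_mul_derivative_s4 {R : Type*} [CommSemiring R] (f : R⟦X⟧) (n : ℕ) :
    coeff n (X * d⁄dX R f) = n * coeff n f := by
  cases n with
  | zero => simp
  | succ n =>
    rw [coeff_succ_X_mul, coeff_derivative]
    push_cast
    ring

variable {K : Type*} [Field K]

theorem inv_pow_succ_mul_derivative_X_mul {u : K⟦X⟧} (hu : constantCoeff u ≠ 0) (m : ℕ) :
    u⁻¹ ^ (m + 1) * d⁄dX K (X * u) = u⁻¹ ^ m + X * (u⁻¹ ^ (m + 1) * d⁄dX K u) := by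
  have hinv : u⁻¹ ^ (m + 1) * u = u⁻¹ ^ m := by
    rw [pow_succ, mul_assoc, mul_comm _ u, PowerSeries.mul_inv_cancel u hu, mul_one]
  rw [Derivation.leibniz, derivative_X, smul_eq_mul, smul_eq_mul, ← hinv]
  ring

theorem X_mul_derivative_inv_pow (u : K⟦X⟧) (m : ℕ) :
    X * d⁄dX K (u⁻¹ ^ m) = -(m : K⟦X⟧) * (X * (u⁻¹ ^ (m + 1) * d⁄dX K u)) := by
  rcases m with _ | m
  · simp
  · rw [derivative_pow, derivative_inv', Nat.add_sub_cancel]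
    ring

theorem coeff_inv_pow_succ_mul_derivative_X_mul [CharZero K] {u : K⟦X⟧}
    (hu : constantCoeff u ≠ 0) (m : ℕ) :
    coeff m (u⁻¹ ^ (m + 1) * d⁄dX K (X * u)) = if m = 0 then 1 else 0 := by
  rw [inv_pow_succ_mul_derivative_X_mul hu, map_add]
  rcases eq_or_ne m 0 with rfl | hm
  · simp
  · have h := congrArg (coeff m) (X_mul_derivative_inv_pow u m)
    rw [coeff_X_mul_derivative_s4, neg_mul, map_neg, ← map_natCast C m, coeff_C_mul] at h
    rw [if_neg hm]
    apply mul_left_cancel₀ (Nat.cast_ne_zero.mpr hm : (m : K) ≠ 0)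
    linear_combination h

end PowerSeries

namespace LaurentSeries

variable {K : Type*} [Field K]

theorem coe_X_mul_zpow_neg_succ {u : K⟦X⟧} (hu : constantCoeff u ≠ 0) (m : ℕ) :
    ((X * u : K⟦X⟧) : K⸨X⸩) ^ (-(m + 1 : ℤ)) =
      HahnSeries.single (-(m + 1 : ℤ)) 1 * ((u⁻¹ ^ (m + 1) : K⟦X⟧) : K⸨X⸩) := by
  rw [zpow_neg, ← Nat.cast_succ, zpow_natCast]
  refine inv_eq_of_mul_eq_one_right ?_
  calc ((X * u : K⟦X⟧) : K⸨X⸩) ^ (m + 1) * (HahnSeries.single (-((m + 1 : ℕ) : ℤ)) 1 *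
          ((u⁻¹ ^ (m + 1) : K⟦X⟧) : K⸨X⸩))
      = HahnSeries.single ((m + 1 : ℕ) : ℤ) 1 * HahnSeries.single (-((m + 1 : ℕ) : ℤ)) 1 *
          (((u * u⁻¹) ^ (m + 1) : K⟦X⟧) : K⸨X⸩) := by
        rw [mul_pow, PowerSeries.coe_mul, PowerSeries.coe_mul, PowerSeries.coe_pow,
          PowerSeries.coe_pow, PowerSeries.coe_X, mul_pow, RatFunc.single_one_eq_pow]
        ring
    _ = 1 := by
        rw [HahnSeries.single_mul_single, add_neg_cancel, mul_one, PowerSeries.mul_inv_cancel u hu,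
          one_pow, PowerSeries.coe_one, mul_one, HahnSeries.single_zero_one]

theorem coeff_neg_one_zpow_mul_derivative [CharZero K] {g : K⟦X⟧}
    (hg0 : constantCoeff g = 0) (hg1 : coeff 1 g ≠ 0) (n : ℤ) :
    ((g : K⸨X⸩) ^ n * ((d⁄dX K g : K⟦X⟧) : K⸨X⸩)).coeff (-1) = if n = -1 then 1 else 0 := by
  obtain ⟨u, rfl⟩ := X_dvd_iff.mpr hg0
  have hu : constantCoeff u ≠ 0 := by
    rwa [← coeff_zero_eq_constantCoeff_apply, ← coeff_succ_X_mul]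
  rcases n with k | m
  · rw [Int.ofNat_eq_natCast, zpow_natCast, ← PowerSeries.coe_pow, ← PowerSeries.coe_mul,
      PowerSeries.coeff_coe, if_pos (by norm_num), if_neg (by omega)]
  · rw [Int.negSucc_eq, coe_X_mul_zpow_neg_succ hu, mul_assoc, ← PowerSeries.coe_mul,
      show (-1 : ℤ) = m + -(m + 1 : ℤ) by ring, HahnSeries.coeff_single_mul_add, one_mul,
      PowerSeries.coeff_coe, if_neg (by omega), Int.natAbs_natCast,
      coeff_inv_pow_succ_mul_derivative_X_mul hu]
    simp

end LaurentSeries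

/-- Jacobi's change of variables formula for residues: if `f` is a formal Laurent
series and `g = g₁x + g₂x² + ⋯` is a power series with zero constant term and
`g₁ ≠ 0`, then `res f = res (f(g)·g')`.  Here the substitution `f(g)` is, by
definition (and by linearity), `∑ₙ fₙ gⁿ` (integer powers `gⁿ` taken in the field
of Laurent series), so `res (f(g)·g') = ∑ₙ fₙ · res (gⁿ·g')`; this sum has only
finitely many nonzero terms, since `res (gⁿ·g') = 0` for `n ≥ 0` and the support of
`f` is bounded below.  It is therefore rendered as a `finsum` over `n : ℤ`. -/
theorem jacobi_residue_change_of_variables (K : Type*) [Field K] [CharZero K]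
    (f : LaurentSeries K) (g : PowerSeries K)
    (hg0 : constantCoeff (R := K) g = 0) (hg1 : coeff (R := K) 1 g ≠ 0) :
    f.coeff (-1) =
      ∑ᶠ n : ℤ, f.coeff n *
        (((g : LaurentSeries K) ^ n) * ((d⁄dX K g : PowerSeries K) : LaurentSeries K)).coeff
          (-1) := by
  simp_rw [LaurentSeries.coeff_neg_one_zpow_mul_derivative hg0 hg1, mul_ite, mul_one, mul_zero]
  rw [finsum_eq_single _ (-1) fun n hn => if_neg hn, if_pos rfl]
end

section
/- Let C be a commutative ring containing the rational numbers, let H(x) and φ(x) be formal power series over C, and let f be the unique formal power series in z over C[[x]] satisfying f = x + z·H(f). Then [z^0] φ(f) = φ(x), and for every integer m ≥ 1, [z^m] φ(f) = (1/m!)·D^{m−1}( φ'(x)·H(x)^m ), where D = d/dx is the formal derivative with respect to x, φ' = Dφ, and [z^m] denotes the coefficient of z^m (an element of C[[x]]). -/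
open PowerSeries

/-- Substitution `φ(f)` of an element `f` of `A⟦x⟧⟦z⟧` into a power series
`φ ∈ A⟦x⟧`.  The truncation in the sum is correct (i.e. this agrees with
`∑ₙ φₙ fⁿ`) whenever every monomial `x^a z^m` occurring in `f` has `a + m ≥ 1`,
which holds for the solution of `f = x + z·H(f)`: then the coefficient of
`x^a z^m` in `fⁿ` vanishes for `n > a + m`. -/
noncomputable def psCompXZ {A : Type*} [CommRing A] (φ : PowerSeries A)
    (f : PowerSeries (PowerSeries A)) : PowerSeries (PowerSeries A) :=
  PowerSeries.mk fun m => PowerSeries.mk fun a =>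
    ∑ n ∈ Finset.range (a + m + 1),
      coeff (R := A) n φ * coeff (R := A) a (coeff (R := PowerSeries A) m (f ^ n))

/-! In `A⟦X⟧⟦X⟧` the inner variable is `x` and the outer one `z`. Write `∂` for `d/dz` and `D` for
`d/dx` applied coefficientwise. Modulo the ideal `(x, z)^N`, the composite `φ(f)` agrees with the
polynomial `(trunc N φ)(f)`; this makes composition with `f` multiplicative and gives the chain
rule `E φ(f) = φ'(f) E f` for both derivations `E = ∂, D`. Differentiating `f = x + z H(f)` gives
`(1 - z H'(f)) ∂f = H(f)` and `(1 - z H'(f)) D f = 1`, hence `∂f = H(f) D f`, and so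
`∂ φ(f) = (φ' H)(f) D f = D ψ(f)` for any `ψ` with `ψ' = φ' H`. On the coefficient of `z^m`
this reads `(m + 1) [z^(m+1)] φ(f) = D [z^m] ψ(f)`, and induction on `m` gives the formula. -/

namespace LagrangeInversion

variable {A : Type*} [CommRing A]

theorem coeff_coeff_mul_eq_zero {M N a m : ℕ} {g h : A⟦X⟧⟦X⟧}
    (hg : ∀ a m, a + m < M → coeff a (coeff m g) = 0)
    (hh : ∀ a m, a + m < N → coeff a (coeff m h) = 0) (ham : a + m < M + N) :
    coeff a (coeff m (g * h)) = 0 := by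
  rw [coeff_mul, map_sum]
  refine Finset.sum_eq_zero fun p hp => ?_
  rw [coeff_mul]
  refine Finset.sum_eq_zero fun q hq => ?_
  rw [Finset.HasAntidiagonal.mem_antidiagonal] at hp hq
  by_cases hlow : q.1 + p.1 < M
  · rw [hg _ _ hlow, zero_mul]
  · rw [hh _ _ (by omega), mul_zero]

variable (A) in
/-- The ideal `(x, z) ^ N`. -/
def totalOrderIdeal (N : ℕ) : Ideal A⟦X⟧⟦X⟧ where
  carrier := {g | ∀ a m, a + m < N → coeff a (coeff m g) = 0}
  add_mem' hg hh a m h := by simp [hg a m h, hh a m h]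
  zero_mem' _ _ _ := by simp
  smul_mem' _ _ hg _ _ h := coeff_coeff_mul_eq_zero (M := 0) (by omega) hg (by omega)

theorem mul_mem_totalOrderIdeal {M N : ℕ} {g h : A⟦X⟧⟦X⟧} (hg : g ∈ totalOrderIdeal A M)
    (hh : h ∈ totalOrderIdeal A N) : g * h ∈ totalOrderIdeal A (M + N) :=
  fun _ _ => coeff_coeff_mul_eq_zero hg hh

theorem pow_mem_totalOrderIdeal {f : A⟦X⟧⟦X⟧} (hf : f ∈ totalOrderIdeal A 1) (n : ℕ) :
    f ^ n ∈ totalOrderIdeal A n := by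
  induction n with
  | zero => exact fun _ _ h => absurd h (Nat.not_lt_zero _)
  | succ n ih => rw [pow_succ]; exact mul_mem_totalOrderIdeal ih hf

theorem eq_of_forall_smodEq_totalOrderIdeal {g h : A⟦X⟧⟦X⟧}
    (H : ∀ N, g ≡ h [SMOD totalOrderIdeal A N]) : g = h := by
  ext m a
  have := SModEq.sub_mem.1 (H (a + m + 1)) a m (by omega)
  rwa [map_sub, map_sub, sub_eq_zero] at this

section Composition

variable {f : A⟦X⟧⟦X⟧} (hf : f ∈ totalOrderIdeal A 1)
include hf

theorem aeval_mem_totalOrderIdeal {N : ℕ} {p : Polynomial A} (hp : ∀ i < N, p.coeff i = 0) :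
    Polynomial.aeval f p ∈ totalOrderIdeal A N := by
  obtain ⟨q, rfl⟩ := Polynomial.X_pow_dvd_iff.2 hp
  rw [map_mul, map_pow, Polynomial.aeval_X]
  exact Ideal.mul_mem_right _ _ (pow_mem_totalOrderIdeal hf N)

theorem psCompXZ_smodEq_aeval_trunc (φ : A⟦X⟧) (N : ℕ) :
    psCompXZ φ f ≡ Polynomial.aeval f (trunc N φ) [SMOD totalOrderIdeal A N] := by
  refine SModEq.sub_mem.2 fun a m ham => ?_
  rw [map_sub, map_sub, Polynomial.aeval_def, eval₂_trunc_eq_sum_range, map_sum, map_sum,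
    sub_eq_zero]
  simp only [psCompXZ, coeff_mk, ← Algebra.smul_def]
  refine Finset.sum_subset (Finset.range_subset_range.2 (by omega)) (fun n _ hn => ?_) |>.trans
    (Finset.sum_congr rfl fun n _ => ?_)
  · rw [Finset.mem_range, not_lt] at hn
    rw [pow_mem_totalOrderIdeal hf n a m (by omega), mul_zero]
  · simp [smul_eq_mul]

theorem psCompXZ_mul (φ χ : A⟦X⟧) : psCompXZ (φ * χ) f = psCompXZ φ f * psCompXZ χ f := by
  refine eq_of_forall_smodEq_totalOrderIdeal fun N => ?_
  have htrunc : Polynomial.aeval f (trunc N (φ * χ)) ≡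
      Polynomial.aeval f (trunc N φ * trunc N χ) [SMOD totalOrderIdeal A N] := by
    rw [SModEq.sub_mem, ← map_sub]
    refine aeval_mem_totalOrderIdeal hf fun i hi => ?_
    rw [Polynomial.coeff_sub, coeff_trunc, if_pos hi, ← Polynomial.coeff_coe, Polynomial.coe_mul,
      ← coeff_mul_eq_coeff_trunc_mul_trunc _ _ hi, sub_self]
  calc psCompXZ (φ * χ) f
      ≡ Polynomial.aeval f (trunc N (φ * χ)) [SMOD totalOrderIdeal A N] :=
        psCompXZ_smodEq_aeval_trunc hf _ N
    _ ≡ Polynomial.aeval f (trunc N φ * trunc N χ) [SMOD totalOrderIdeal A N] := htrunc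
    _ = Polynomial.aeval f (trunc N φ) * Polynomial.aeval f (trunc N χ) := map_mul _ _ _
    _ ≡ psCompXZ φ f * psCompXZ χ f [SMOD totalOrderIdeal A N] :=
        ((psCompXZ_smodEq_aeval_trunc hf φ N).mul (psCompXZ_smodEq_aeval_trunc hf χ N)).symm

theorem derivation_psCompXZ (D : Derivation A A⟦X⟧⟦X⟧ A⟦X⟧⟦X⟧)
    (hD : ∀ N, ∀ g ∈ totalOrderIdeal A (N + 1), D g ∈ totalOrderIdeal A N) (φ : A⟦X⟧) :
    D (psCompXZ φ f) = psCompXZ (d⁄dX A φ) f * D f := by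
  refine eq_of_forall_smodEq_totalOrderIdeal fun N => ?_
  have hD' := hD N _ (SModEq.sub_mem.1 (psCompXZ_smodEq_aeval_trunc hf φ (N + 1)))
  rw [map_sub] at hD'
  calc D (psCompXZ φ f)
      ≡ D (Polynomial.aeval f (trunc (N + 1) φ)) [SMOD totalOrderIdeal A N] := SModEq.sub_mem.2 hD'
    _ = Polynomial.aeval f (trunc N (d⁄dX A φ)) * D f := by
        rw [Derivation.map_aeval, trunc_derivative, smul_eq_mul]
    _ ≡ psCompXZ (d⁄dX A φ) f * D f [SMOD totalOrderIdeal A N] :=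
        (psCompXZ_smodEq_aeval_trunc hf _ N).symm.mul SModEq.rfl

end Composition

variable (A) in
noncomputable def innerDerivative : Derivation A A⟦X⟧⟦X⟧ A⟦X⟧⟦X⟧ :=
  Derivation.mk'
    { toFun g := mk fun m => d⁄dX A (coeff m g)
      map_add' g h := by ext m : 1; simp
      map_smul' c g := by ext m : 1; simp }
    fun g h => by
      rw [smul_eq_mul, smul_eq_mul, mul_comm h]
      ext m : 1
      simp only [LinearMap.coe_mk, AddHom.coe_mk, coeff_mul, map_sum, Derivation.leibniz,
        smul_eq_mul, Finset.sum_add_distrib, coeff_mk, map_add, add_right_inj]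
      exact Finset.sum_congr rfl fun _ _ => mul_comm _ _

@[simp]
theorem coeff_innerDerivative (m : ℕ) (g : A⟦X⟧⟦X⟧) :
    coeff m (innerDerivative A g) = d⁄dX A (coeff m g) := by
  simp [innerDerivative]

theorem innerDerivative_C (w : A⟦X⟧) : innerDerivative A (C w) = C (d⁄dX A w) := by
  ext m : 1
  simp only [coeff_innerDerivative, coeff_C]
  split_ifs <;> simp

theorem innerDerivative_X : innerDerivative A (X : A⟦X⟧⟦X⟧) = 0 := by
  ext m : 1
  simp only [coeff_innerDerivative, coeff_X]
  split_ifs <;> simp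

theorem innerDerivative_mem_totalOrderIdeal {N : ℕ} {g : A⟦X⟧⟦X⟧}
    (hg : g ∈ totalOrderIdeal A (N + 1)) : innerDerivative A g ∈ totalOrderIdeal A N := by
  intro a m ham
  rw [coeff_innerDerivative, coeff_derivative, hg (a + 1) m (by omega), zero_mul]

theorem derivative_mem_totalOrderIdeal {N : ℕ} {g : A⟦X⟧⟦X⟧}
    (hg : g ∈ totalOrderIdeal A (N + 1)) : d⁄dX A⟦X⟧ g ∈ totalOrderIdeal A N := by
  intro a m ham
  rw [coeff_derivative, mul_comm, ← Nat.cast_succ, ← nsmul_eq_mul, map_nsmul,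
    hg a (m + 1) (by omega), smul_zero]

theorem innerDerivative_psCompXZ {f : A⟦X⟧⟦X⟧} (hf : f ∈ totalOrderIdeal A 1) (φ : A⟦X⟧) :
    innerDerivative A (psCompXZ φ f) = psCompXZ (d⁄dX A φ) f * innerDerivative A f :=
  derivation_psCompXZ hf _ (fun _ _ => innerDerivative_mem_totalOrderIdeal) φ

theorem derivative_psCompXZ {f : A⟦X⟧⟦X⟧} (hf : f ∈ totalOrderIdeal A 1) (φ : A⟦X⟧) :
    d⁄dX A⟦X⟧ (psCompXZ φ f) = psCompXZ (d⁄dX A φ) f * d⁄dX A⟦X⟧ f :=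
  -- Not `(d⁄dX A⟦X⟧).restrictScalars A`: instance search would supply the coefficientwise
  -- `A⟦X⟧`-algebra structure `algebraPowerSeries` on `A⟦X⟧⟦X⟧`, not the one `d⁄dX` is built on.
  derivation_psCompXZ hf
    (Derivation.mk'
      { toFun g := d⁄dX A⟦X⟧ g
        map_add' g h := by simp
        map_smul' (c : A) g := by ext m : 1; simp [coeff_derivative] }
      fun g h => by simp)
    (fun _ _ => derivative_mem_totalOrderIdeal) φ

theorem exists_derivative_eq [Algebra ℚ A] (χ : A⟦X⟧) : ∃ ψ, d⁄dX A ψ = χ := by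
  refine ⟨mk fun n => (n : ℚ)⁻¹ • coeff (n - 1) χ, ?_⟩
  ext n
  rw [coeff_derivative, coeff_mk, Nat.add_sub_cancel, smul_mul_assoc, mul_comm, ← Nat.cast_succ,
    ← nsmul_eq_mul, ← Nat.cast_smul_eq_nsmul ℚ, inv_smul_smul₀ (by positivity)]

section FunctionalEquation

variable {f : A⟦X⟧⟦X⟧} (H : A⟦X⟧) (hf : f = C X + X * psCompXZ H f)
include hf

theorem mem_totalOrderIdeal_one_of_eq : f ∈ totalOrderIdeal A 1 := by
  intro a m ham
  obtain ⟨rfl, rfl⟩ : a = 0 ∧ m = 0 := by omega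
  rw [hf]
  simp

theorem coeff_zero_of_eq : coeff 0 f = X := by
  rw [hf]
  simp

theorem coeff_zero_psCompXZ_of_eq (φ : A⟦X⟧) : coeff 0 (psCompXZ φ f) = φ := by
  have hpow (n : ℕ) : coeff 0 (f ^ n) = X ^ n := by
    rw [coeff_zero_eq_constantCoeff_apply, map_pow, ← coeff_zero_eq_constantCoeff_apply,
      coeff_zero_of_eq H hf]
  ext a
  simp [psCompXZ, hpow, coeff_X_pow]

theorem derivative_eq_mul_innerDerivative_of_eq :
    d⁄dX A⟦X⟧ f = psCompXZ H f * innerDerivative A f := by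
  have h1 := mem_totalOrderIdeal_one_of_eq H hf
  set u := X * psCompXZ (d⁄dX A H) f
  have hz : (1 - u) * d⁄dX A⟦X⟧ f = psCompXZ H f := by
    have := congrArg (d⁄dX A⟦X⟧) hf
    simp only [map_add, derivative_C, Derivation.leibniz, derivative_psCompXZ h1, smul_eq_mul,
      derivative_X, mul_one, zero_add] at this
    linear_combination this
  have hx : (1 - u) * innerDerivative A f = 1 := by
    have := congrArg (innerDerivative A) hf
    simp only [map_add, innerDerivative_C, derivative_X, map_one, Derivation.leibniz,
      innerDerivative_psCompXZ h1, smul_eq_mul, innerDerivative_X, mul_zero, add_zero] at this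
    linear_combination this
  linear_combination (-(d⁄dX A⟦X⟧ f) * hx) + innerDerivative A f * hz

theorem derivative_psCompXZ_eq_innerDerivative_of_eq {φ ψ : A⟦X⟧}
    (hψ : d⁄dX A ψ = d⁄dX A φ * H) :
    d⁄dX A⟦X⟧ (psCompXZ φ f) = innerDerivative A (psCompXZ ψ f) := by
  have h1 := mem_totalOrderIdeal_one_of_eq H hf
  rw [derivative_psCompXZ h1, derivative_eq_mul_innerDerivative_of_eq H hf,
    innerDerivative_psCompXZ h1, hψ, psCompXZ_mul h1, mul_assoc]

theorem succ_nsmul_coeff_succ_psCompXZ_of_eq {φ ψ : A⟦X⟧} (hψ : d⁄dX A ψ = d⁄dX A φ * H)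
    (m : ℕ) : (m + 1) • coeff (m + 1) (psCompXZ φ f) = d⁄dX A (coeff m (psCompXZ ψ f)) := by
  have := congrArg (coeff m) (derivative_psCompXZ_eq_innerDerivative_of_eq H hf hψ)
  rwa [coeff_derivative, coeff_innerDerivative, mul_comm, ← Nat.cast_succ, ← nsmul_eq_mul]
    at this

theorem factorial_nsmul_coeff_succ_psCompXZ_of_eq [Algebra ℚ A] (m : ℕ) (φ : A⟦X⟧) :
    (m + 1).factorial • coeff (m + 1) (psCompXZ φ f) =
      (d⁄dX A)^[m] (d⁄dX A φ * H ^ (m + 1)) := by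
  induction m generalizing φ with
  | zero =>
    obtain ⟨ψ, hψ⟩ := exists_derivative_eq (d⁄dX A φ * H)
    simpa [coeff_zero_psCompXZ_of_eq H hf, hψ] using
      succ_nsmul_coeff_succ_psCompXZ_of_eq H hf hψ 0
  | succ m ih =>
    obtain ⟨ψ, hψ⟩ := exists_derivative_eq (d⁄dX A φ * H)
    calc (m + 2).factorial • coeff (m + 2) (psCompXZ φ f)
        = (m + 1).factorial • ((m + 2) • coeff (m + 2) (psCompXZ φ f)) := by
          rw [smul_smul, Nat.factorial_succ (m + 1), mul_comm]
      _ = d⁄dX A ((m + 1).factorial • coeff (m + 1) (psCompXZ ψ f)) := by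
          rw [succ_nsmul_coeff_succ_psCompXZ_of_eq H hf hψ, map_nsmul]
      _ = (d⁄dX A)^[m + 1] (d⁄dX A φ * H ^ (m + 2)) := by
          rw [ih ψ, hψ, mul_assoc, ← pow_succ', Function.iterate_succ_apply']

end FunctionalEquation

end LagrangeInversion

/-- Lagrange inversion in derivative form: if `f ∈ C⟦x⟧⟦z⟧` satisfies
`f = x + z·H(f)` then `[z⁰] φ(f) = φ(x)` and for `m ≥ 1`,
`[z^m] φ(f) = (1/m!)·D^{m−1}( φ'(x)·H(x)^m )` where `D = d/dx`. -/
theorem lagrange_inversion_shift_derivative_form (A : Type*) [CommRing A] [Algebra ℚ A]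
    (H φ : PowerSeries A) (f : PowerSeries (PowerSeries A))
    (hf : f = PowerSeries.C (R := PowerSeries A) PowerSeries.X + PowerSeries.X * psCompXZ H f) :
    coeff (R := PowerSeries A) 0 (psCompXZ φ f) = φ ∧
      ∀ m : ℕ, 1 ≤ m →
        coeff (R := PowerSeries A) m (psCompXZ φ f) =
          (m.factorial : ℚ)⁻¹ • (fun g => d⁄dX A g)^[m - 1] (d⁄dX A φ * H ^ m) := by
  refine ⟨LagrangeInversion.coeff_zero_psCompXZ_of_eq H hf φ, fun m hm => ?_⟩
  obtain ⟨k, rfl⟩ := Nat.exists_eq_add_of_le' hm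
  rw [Nat.add_sub_cancel, ← LagrangeInversion.factorial_nsmul_coeff_succ_psCompXZ_of_eq H hf,
    ← Nat.cast_smul_eq_nsmul ℚ, inv_smul_smul₀ (by positivity)]
end

section
/- (Pfaff–Cauchy convolution identity.) Let C be a commutative ring containing the rational numbers and let φ(x), ψ(x), H(x) be formal power series over C. Then for every integer n ≥ 0, Σ_{m=0}^{n} C(n,m) · A_m · D^{n−m}( ψ(x)·H(x)^{n−m} ) = D^{n}( φ(x)·ψ(x)·H(x)^{n} ), where D = d/dx is the formal derivative, A_0 = φ(x), and A_m = D^{m−1}( φ'(x)·H(x)^m ) for m ≥ 1. -/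
/-!
Write `B_k(c) = D^k(c H^k)`, so that `A_{m+1}(φ) = B_m(φ' H)`. Two identities drive an induction
on `n`: `B_{k+1}(c) = D(B_k(c H))`, and `D(c H^{k+1}) = c' H^{k+1} + (k+1) c H' H^k`, which gives
`B_{k+1}(c) = A_{k+1}(c) + (k+1) B_k(c H')`. Differentiating the identity at `n` for `(φ, ψ H)`
by Leibniz's rule yields the one at `n + 1` once the binomial convolution
`T_n(a, b) = ∑ C(n,i) B_i(a) B_{n-i}(b)` is known to satisfy `T_n(a H, b) = T_n(a, b H)`.
Conversely, the second identity gives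
`T_{n+1}(a, b) = ∑ C(n+1,i) A_i(a) B_{n+1-i}(b) + (n+1) T_n(a H', b)`, so the exchange property at `n + 1` follows from the identity at `n + 1` and the exchange
property at `n`.
-/

open PowerSeries Finset

namespace PfaffCauchy

variable {R : Type*} [CommSemiring R] (H : R⟦X⟧)

noncomputable def iterDerivMulPow (k : ℕ) (c : R⟦X⟧) : R⟦X⟧ :=
  (d⁄dX R)^[k] (c * H ^ k)

noncomputable def pfaffA (φ : R⟦X⟧) : ℕ → R⟦X⟧
  | 0 => φ
  | m + 1 => iterDerivMulPow H m (d⁄dX R φ * H)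

noncomputable def binomConv (n : ℕ) (a b : R⟦X⟧) : R⟦X⟧ :=
  ∑ ij ∈ antidiagonal n, n.choose ij.1 • (iterDerivMulPow H ij.1 a * iterDerivMulPow H ij.2 b)

noncomputable def pfaffConv (n : ℕ) (φ ψ : R⟦X⟧) : R⟦X⟧ :=
  ∑ ij ∈ antidiagonal n, n.choose ij.1 • (pfaffA H φ ij.1 * iterDerivMulPow H ij.2 ψ)

@[simp]
lemma iterDerivMulPow_zero (c : R⟦X⟧) : iterDerivMulPow H 0 c = c := by
  simp [iterDerivMulPow]

lemma iterDerivMulPow_succ (k : ℕ) (c : R⟦X⟧) :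
    iterDerivMulPow H (k + 1) c = d⁄dX R (iterDerivMulPow H k (c * H)) := by
  rw [iterDerivMulPow, iterDerivMulPow, Function.iterate_succ_apply', pow_succ', mul_assoc]

lemma iterDerivMulPow_succ_eq_pfaffA_add (k : ℕ) (c : R⟦X⟧) :
    iterDerivMulPow H (k + 1) c =
      pfaffA H c (k + 1) + (k + 1) • iterDerivMulPow H k (c * d⁄dX R H) := by
  have hderiv : d⁄dX R (c * H ^ (k + 1)) =
      d⁄dX R c * H * H ^ k + (k + 1) • (c * d⁄dX R H * H ^ k) := by
    rw [Derivation.leibniz, Derivation.leibniz_pow]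
    simp only [smul_eq_mul, nsmul_eq_mul, Nat.add_sub_cancel]
    push_cast
    ring
  rw [iterDerivMulPow, Function.iterate_succ_apply, hderiv, iterate_map_add, iterate_map_nsmul]
  rfl

lemma derivative_pfaffA (φ : R⟦X⟧) (m : ℕ) :
    d⁄dX R (pfaffA H φ m) = iterDerivMulPow H m (d⁄dX R φ) := by
  cases m with
  | zero => simp [pfaffA]
  | succ m => rw [pfaffA, iterDerivMulPow_succ]

lemma pfaffA_eq_ite (φ : R⟦X⟧) (m : ℕ) :
    pfaffA H φ m = if m = 0 then φ else (d⁄dX R)^[m - 1] (d⁄dX R φ * H ^ m) := by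
  cases m with
  | zero => rfl
  | succ m => rw [pfaffA, iterDerivMulPow, mul_assoc, ← pow_succ']; rfl

lemma binomConv_succ (n : ℕ) (a b : R⟦X⟧) :
    binomConv H (n + 1) a b =
      pfaffConv H (n + 1) a b + (n + 1) • binomConv H n (a * d⁄dX R H) b := by
  have hterm : ∀ ij ∈ antidiagonal n,
      (n + 1).choose (ij.1 + 1) • (iterDerivMulPow H (ij.1 + 1) a * iterDerivMulPow H ij.2 b) =
        (n + 1).choose (ij.1 + 1) • (pfaffA H a (ij.1 + 1) * iterDerivMulPow H ij.2 b) +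
          (n + 1) • (n.choose ij.1 •
            (iterDerivMulPow H ij.1 (a * d⁄dX R H) * iterDerivMulPow H ij.2 b)) := by
    intro ij _
    rw [iterDerivMulPow_succ_eq_pfaffA_add, add_mul, smul_add, smul_mul_assoc, smul_smul,
      smul_smul, ← Nat.add_one_mul_choose_eq]
  rw [binomConv, binomConv, pfaffConv, Nat.sum_antidiagonal_succ, Nat.sum_antidiagonal_succ,
    sum_congr rfl hterm, sum_add_distrib, smul_sum, iterDerivMulPow_zero, add_assoc]
  rfl

lemma pfaffConv_succ_eq (n : ℕ)
    (hconv : ∀ φ ψ, pfaffConv H n φ ψ = iterDerivMulPow H n (φ * ψ))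
    (hexch : ∀ a b, binomConv H n (a * H) b = binomConv H n a (b * H)) (φ ψ : R⟦X⟧) :
    pfaffConv H (n + 1) φ ψ = iterDerivMulPow H (n + 1) (φ * ψ) := by
  have hpascal : pfaffConv H (n + 1) φ ψ =
      ∑ ij ∈ antidiagonal n,
          n.choose ij.1 • (pfaffA H φ ij.1 * iterDerivMulPow H (ij.2 + 1) ψ) +
        binomConv H n (d⁄dX R φ * H) ψ := by
    rw [pfaffConv, sum_antidiagonal_choose_succ_nsmul
      (fun i j => pfaffA H φ i * iterDerivMulPow H j ψ)]
    congr 1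
    refine sum_congr rfl fun ij hij => ?_
    rw [Nat.choose_symm_of_eq_add (mem_antidiagonal.1 hij).symm]
    rfl
  have hleibniz : d⁄dX R (pfaffConv H n φ (ψ * H)) =
      ∑ ij ∈ antidiagonal n,
          n.choose ij.1 • (pfaffA H φ ij.1 * iterDerivMulPow H (ij.2 + 1) ψ) +
        binomConv H n (d⁄dX R φ) (ψ * H) := by
    rw [pfaffConv, map_sum, binomConv, ← sum_add_distrib]
    refine sum_congr rfl fun ij _ => ?_
    rw [map_nsmul, Derivation.leibniz, smul_eq_mul, smul_eq_mul, derivative_pfaffA,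
      ← iterDerivMulPow_succ, smul_add, mul_comm (iterDerivMulPow H ij.2 _)]
  rw [hpascal, hexch, ← hleibniz, hconv, iterDerivMulPow_succ, mul_assoc]

lemma binomConv_exchange_succ (n : ℕ)
    (hconv : ∀ φ ψ, pfaffConv H (n + 1) φ ψ = iterDerivMulPow H (n + 1) (φ * ψ))
    (hexch : ∀ a b, binomConv H n (a * H) b = binomConv H n a (b * H)) (a b : R⟦X⟧) :
    binomConv H (n + 1) (a * H) b = binomConv H (n + 1) a (b * H) := by
  rw [binomConv_succ, binomConv_succ, hconv, hconv, mul_right_comm a H (d⁄dX R H), hexch,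
    mul_right_comm a H b, mul_assoc a b H]

lemma pfaffConv_eq_iterDerivMulPow (n : ℕ) (φ ψ : R⟦X⟧) :
    pfaffConv H n φ ψ = iterDerivMulPow H n (φ * ψ) := by
  suffices h : (∀ φ ψ, pfaffConv H n φ ψ = iterDerivMulPow H n (φ * ψ)) ∧
      ∀ a b, binomConv H n (a * H) b = binomConv H n a (b * H) from h.1 φ ψ
  induction n with
  | zero => simp [pfaffConv, binomConv, pfaffA, mul_assoc, mul_comm H]
  | succ n ih =>
    have hconv := pfaffConv_succ_eq H n ih.1 ih.2
    exact ⟨hconv, binomConv_exchange_succ H n hconv ih.2⟩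

end PfaffCauchy

open PfaffCauchy in
theorem pfaff_cauchy_convolution_general (C : Type*) [CommRing C]
    (φ ψ H : PowerSeries C) (n : ℕ) :
    ∑ m ∈ Finset.range (n + 1),
        (n.choose m : PowerSeries C) *
          (if m = 0 then φ else (fun g => d⁄dX C g)^[m - 1] (d⁄dX C φ * H ^ m)) *
          (fun g => d⁄dX C g)^[n - m] (ψ * H ^ (n - m)) =
      (fun g => d⁄dX C g)^[n] (φ * ψ * H ^ n) := by
  have h := pfaffConv_eq_iterDerivMulPow H n φ ψ
  rw [pfaffConv, Nat.sum_antidiagonal_eq_sum_range_succ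
    (fun i j => n.choose i • (pfaffA H φ i * iterDerivMulPow H j ψ))] at h
  simp only [nsmul_eq_mul, pfaffA_eq_ite, ← mul_assoc] at h
  exact h

/-- The Pfaff–Cauchy convolution identity: for formal power series `φ, ψ, H` over a
commutative ring containing `ℚ` and every `n ≥ 0`,
`∑_{m=0}^{n} C(n,m)·A_m·D^{n−m}(ψ·H^{n−m}) = D^{n}(φ·ψ·H^{n})`,
where `A₀ = φ` and `A_m = D^{m−1}(φ'·H^m)` for `m ≥ 1`. -/
theorem pfaff_cauchy_convolution (C : Type*) [CommRing C] [Algebra ℚ C]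
    (φ ψ H : PowerSeries C) (n : ℕ) :
    ∑ m ∈ Finset.range (n + 1),
        (n.choose m : PowerSeries C) *
          (if m = 0 then φ else (fun g => d⁄dX C g)^[m - 1] (d⁄dX C φ * H ^ m)) *
          (fun g => d⁄dX C g)^[n - m] (ψ * H ^ (n - m)) =
      (fun g => d⁄dX C g)^[n] (φ * ψ * H ^ n) :=
  pfaff_cauchy_convolution_general C φ ψ H n
end

section
/- Let T(x) be the tree function, i.e., the unique formal power series over ℚ with zero constant term satisfying T = x·exp(T). Then for all integers n ≥ k ≥ 1, the coefficient of x^n in T(x)^k satisfies (n!/k!)·[x^n] T^k = C(n−1, k−1) · n^{n−k}. Equivalently, T^k/k! = Σ_{n≥k} C(n−1,k−1) n^{n−k} x^n/n!. -/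
/-!
Comparing coefficients in `T^(s+1) = x·exp(T)·T^s` gives the recurrence
`[x^(r+1)] T^(s+1) = ∑ₘ [x^r] T^(m+s) / m!`, which determines every coefficient by induction on
the degree. The closed form `[xⁿ] T^k = k n^(n-k-1)/(n-k)!` satisfies it: with `r = s + N`, the
recurrence reduces to the binomial identity
`(x+1) ∑ₘ C(N,m) (m+s) x^(N-m) = (x+1)^N (N + s(x+1))` evaluated at `x = r`,
where `N + s(r+1) = r(s+1)`.
-/

open PowerSeries

open Finset

theorem add_one_mul_sum_choose_add_mul_pow {R : Type*} [CommSemiring R] (x s : R) (N : ℕ) :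
    (x + 1) * ∑ m ∈ range (N + 1), (N.choose m : R) * ((m + s) * x ^ (N - m)) =
      (x + 1) ^ N * (N + s * (x + 1)) := by
  induction N generalizing s with
  | zero => simp [mul_comm]
  | succ N ih =>
    have hsplit : ∑ m ∈ range (N + 2), ((N + 1).choose m : R) * ((m + s) * x ^ (N + 1 - m)) =
        x * ∑ m ∈ range (N + 1), (N.choose m : R) * ((m + s) * x ^ (N - m)) +
          ∑ m ∈ range (N + 1), (N.choose m : R) * ((m + (s + 1)) * x ^ (N - m)) := by
      rw [sum_choose_succ_mul (fun i j => ((i : R) + s) * x ^ j), mul_sum]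
      congr 1 <;> refine sum_congr rfl fun m hm => ?_
      · rw [Nat.sub_add_comm (mem_range_succ_iff.mp hm), pow_succ]
        ring
      · push_cast
        ring
    rw [hsplit, mul_add, mul_left_comm, ih, ih]
    push_cast
    ring

theorem coeff_pow_eq_zero_of_lt {A : Type*} [CommRing A] {f : PowerSeries A}
    (hf : constantCoeff f = 0) {n k : ℕ} (h : n < k) : coeff n (f ^ k) = 0 :=
  X_pow_dvd_iff.mp (pow_dvd_pow_of_dvd (X_dvd_iff.mpr hf) k) n h

theorem coeff_psComp_eq_sum_range_of_le {A : Type*} [CommRing A] (φ : PowerSeries A)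
    {f : PowerSeries A} (hf : constantCoeff f = 0) {n N : ℕ} (h : n ≤ N) :
    coeff n (psComp φ f) = ∑ m ∈ range (N + 1), coeff m φ * coeff n (f ^ m) := by
  rw [psComp, coeff_mk]
  refine sum_subset (range_subset_range.mpr (by omega)) fun m _ hm => ?_
  rw [coeff_pow_eq_zero_of_lt hf (by simpa using hm), mul_zero]

/-- `[xⁿ] T^k = k n^(n-k-1)/(n-k)!`, written with `n^(n-k)` so that the case `n = k` involves no
negative exponent. -/
noncomputable def treePowCoeff (n k : ℕ) : ℚ :=
  k * n ^ (n - k) / (n * (n - k).factorial)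

theorem sum_inv_factorial_mul_treePowCoeff {s N : ℕ} (h : 0 < s + N) :
    ∑ m ∈ range (N + 1), ((m.factorial : ℚ))⁻¹ * treePowCoeff (s + N) (m + s) =
      treePowCoeff (s + N + 1) (s + 1) := by
  have hx : ((s + N : ℕ) : ℚ) ≠ 0 := by exact_mod_cast h.ne'
  have hterm : ∀ m ∈ range (N + 1), ((m.factorial : ℚ))⁻¹ * treePowCoeff (s + N) (m + s) =
      (N.choose m : ℚ) * ((m + s) * ((s + N : ℕ) : ℚ) ^ (N - m)) /
        ((s + N : ℕ) * N.factorial) := by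
    intro m hm
    have hmN := mem_range_succ_iff.mp hm
    have hchoose : (N.choose m : ℚ) ≠ 0 := by exact_mod_cast (Nat.choose_pos hmN).ne'
    rw [treePowCoeff, show s + N - (m + s) = N - m by omega,
      ← Nat.choose_mul_factorial_mul_factorial hmN]
    push_cast at hx ⊢
    field_simp
  rw [sum_congr rfl hterm, ← sum_div, treePowCoeff, show s + N + 1 - (s + 1) = N by omega]
  have habel := add_one_mul_sum_choose_add_mul_pow ((s + N : ℕ) : ℚ) (s : ℚ) N
  generalize ∑ m ∈ range (N + 1), (N.choose m : ℚ) * ((m + s) * ((s + N : ℕ) : ℚ) ^ (N - m)) = S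
    at habel ⊢
  push_cast at hx habel ⊢
  field_simp
  linear_combination habel

theorem factorial_div_factorial_mul_treePowCoeff {n k : ℕ} (hk : 1 ≤ k) (hkn : k ≤ n) :
    ((n.factorial : ℚ) / k.factorial) * treePowCoeff n k =
      ((n - 1).choose (k - 1) : ℚ) * (n : ℚ) ^ (n - k) := by
  obtain ⟨a, rfl⟩ := Nat.exists_eq_add_one_of_ne_zero (show n ≠ 0 by omega)
  obtain ⟨b, rfl⟩ := Nat.exists_eq_add_one_of_ne_zero (show k ≠ 0 by omega)
  rw [treePowCoeff, Nat.add_sub_cancel, Nat.add_sub_cancel, Nat.add_sub_add_right,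
    Nat.cast_choose ℚ (by omega : b ≤ a), Nat.factorial_succ, Nat.factorial_succ]
  push_cast
  field_simp

section TreeFunction

variable {T : PowerSeries ℚ} (hT0 : constantCoeff T = 0)
  (hT : T = X * psComp (PowerSeries.exp ℚ) T)
include hT0 hT

theorem coeff_succ_pow_succ_of_eq_X_mul_exp (r s : ℕ) :
    coeff (r + 1) (T ^ (s + 1)) =
      ∑ m ∈ range (r + 1), ((m.factorial : ℚ))⁻¹ * coeff r (T ^ (m + s)) := by
  have hpow : T ^ (s + 1) = X * (psComp (PowerSeries.exp ℚ) T * T ^ s) := by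
    rw [pow_succ', ← mul_assoc, ← hT]
  rw [hpow, coeff_succ_X_mul, coeff_mul]
  calc ∑ p ∈ antidiagonal r, coeff p.1 (psComp (PowerSeries.exp ℚ) T) * coeff p.2 (T ^ s)
      = ∑ p ∈ antidiagonal r, ∑ m ∈ range (r + 1),
          coeff m (PowerSeries.exp ℚ) * (coeff p.1 (T ^ m) * coeff p.2 (T ^ s)) := by
        refine sum_congr rfl fun p hp => ?_
        rw [coeff_psComp_eq_sum_range_of_le _ hT0 (HasAntidiagonal.antidiagonal.fst_le hp),
          sum_mul]
        simp only [mul_assoc]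
    _ = ∑ m ∈ range (r + 1), ((m.factorial : ℚ))⁻¹ * coeff r (T ^ (m + s)) := by
        rw [sum_comm]
        refine sum_congr rfl fun m _ => ?_
        rw [← mul_sum, ← coeff_mul, ← pow_add, coeff_exp]
        simp

theorem coeff_pow_eq_treePowCoeff {n k : ℕ} (hn : 0 < n) (hkn : k ≤ n) :
    coeff n (T ^ k) = treePowCoeff n k := by
  induction n using Nat.strong_induction_on generalizing k with
  | _ n ih =>
  obtain ⟨r, rfl⟩ := Nat.exists_eq_add_one_of_ne_zero hn.ne'
  rcases k with _ | s
  · simp [treePowCoeff, coeff_one]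
  rw [coeff_succ_pow_succ_of_eq_X_mul_exp hT0 hT]
  rcases Nat.eq_zero_or_pos r with rfl | hr
  -- `treePowCoeff 0 0 = 0` is a junk value (division by zero), while `[x⁰] T⁰ = 1`.
  · obtain rfl : s = 0 := by omega
    simp [treePowCoeff]
  obtain ⟨N, rfl⟩ := Nat.exists_eq_add_of_le (show s ≤ r by omega)
  have hvanish : ∀ m ∈ range (s + N + 1), m ∉ range (N + 1) →
      ((m.factorial : ℚ))⁻¹ * coeff (s + N) (T ^ (m + s)) = 0 := fun m _ hm => by
    rw [coeff_pow_eq_zero_of_lt hT0 (by rw [mem_range] at hm; omega), mul_zero]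
  rw [← sum_subset (range_subset_range.mpr (by omega)) hvanish]
  rw [sum_congr rfl fun m hm => by rw [ih (s + N) (by omega) hr (by rw [mem_range] at hm; omega)]]
  exact sum_inv_factorial_mul_treePowCoeff hr

end TreeFunction

/-- Let `T` be the tree function, the unique power series over `ℚ` with zero constant
term satisfying `T = x·exp(T)`.  Then for `n ≥ k ≥ 1`,
`(n!/k!)·[xⁿ] T^k = C(n−1, k−1)·n^{n−k}`. -/
theorem tree_function_power_coeff (T : PowerSeries ℚ)
    (hT0 : constantCoeff T = 0) (hT : T = X * psComp (PowerSeries.exp ℚ) T)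
    (n k : ℕ) (hk : 1 ≤ k) (hkn : k ≤ n) :
    ((n.factorial : ℚ) / (k.factorial : ℚ)) * coeff n (T ^ k) =
      ((n - 1).choose (k - 1) : ℚ) * (n : ℚ) ^ (n - k) := by
  rw [coeff_pow_eq_treePowCoeff hT0 hT (by omega) hkn,
    factorial_div_factorial_mul_treePowCoeff hk hkn]
end

section
/- (Abel's identity.) For every integer n ≥ 0 and all real numbers x and y, (x+y)^n = y^n + Σ_{i=1}^{n} C(n,i) · x · (x+i)^{i−1} · (y−i)^{n−i}, where C(n,i) is the ordinary binomial coefficient. -/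
/-!
Write `abelSum n x y` for the right-hand side. Differentiating in `y` and using
`C(n+1,i) (n+1-i) = (n+1) C(n,i)` gives `∂_y abelSum (n+1) x = (n+1) abelSum n x`, the recurrence
satisfied by `(x+y)^n`; so by induction it suffices to compare the two sides at `y = -x`. There
`(-x-i)^(n+1-i) = ±(x+i)^(n+1-i)` merges with `(x+i)^(i-1)`, and `abelSum (n+1) x (-x)` becomes `x`
times the `(n+1)`-st forward difference of the degree-`n` polynomial `t ↦ t^n`, which vanishes.
-/

open Finset

theorem sum_range_neg_one_pow_mul_choose_mul_add_pow_eq_zero {R : Type*} [CommRing R]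
    {j n : ℕ} (h : j < n) (x : R) :
    ∑ k ∈ range (n + 1), (-1) ^ (n - k) * (n.choose k : R) * (x + k) ^ j = 0 := by
  have := congr_fun (fwdDiff_iter_pow_eq_zero_of_lt (R := R) h) x
  rw [fwdDiff_iter_eq_sum_shift] at this
  simpa [zsmul_eq_mul] using this

section

variable {R : Type*} [CommRing R]

def abelSum (n : ℕ) (x y : R) : R :=
  y ^ n + ∑ i ∈ Icc 1 n, (n.choose i : R) * x * (x + i) ^ (i - 1) * (y - i) ^ (n - i)

theorem abelSum_succ_neg_self (n : ℕ) (x : R) : abelSum (n + 1) x (-x) = 0 := by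
  have hterm : ∀ i ∈ Icc 1 (n + 1), ((n + 1).choose i : R) * x * (x + i) ^ (i - 1) *
      (-x - i) ^ (n + 1 - i) = x * ((-1) ^ (n + 1 - i) * ((n + 1).choose i : R) * (x + i) ^ n) := by
    intro i hi
    have hpow : (x + i) ^ (i - 1) * (x + i) ^ (n + 1 - i) = (x + i) ^ n := by
      rw [← pow_add]; congr 1; grind
    rw [show -x - i = -(x + i) by ring, neg_pow]
    linear_combination ((n + 1).choose i : R) * x * (-1) ^ (n + 1 - i) * hpow
  rw [abelSum, sum_congr rfl hterm, ← mul_sum, ← mul_eq_zero_of_right x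
    (sum_range_neg_one_pow_mul_choose_mul_add_pow_eq_zero (Nat.lt_add_one n) x),
    range_eq_Ico, sum_eq_sum_Ico_succ_bot (Nat.zero_lt_succ _), zero_add, Nat.succ_eq_add_one,
    Ico_add_one_right_eq_Icc, neg_pow x]
  simp only [Nat.sub_zero, Nat.choose_zero_right, Nat.cast_zero, Nat.cast_one, add_zero]
  ring

end

section

variable {𝕜 : Type*} [NontriviallyNormedField 𝕜]

theorem hasDerivAt_abelSum_succ (n : ℕ) (x y : 𝕜) :
    HasDerivAt (abelSum (n + 1) x) ((n + 1) * abelSum n x y) y := by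
  have hterm (i : ℕ) : HasDerivAt
      (fun y ↦ ((n + 1).choose i : 𝕜) * x * (x + i) ^ (i - 1) * (y - i) ^ (n + 1 - i))
      (((n + 1).choose i : 𝕜) * x * (x + i) ^ (i - 1) * ((n + 1 - i : ℕ) * (y - i) ^ (n - i))) y := by
    have h := (((hasDerivAt_id y).sub_const (i : 𝕜)).pow (n + 1 - i)).const_mul
      (((n + 1).choose i : 𝕜) * x * (x + i) ^ (i - 1))
    rwa [Nat.sub_right_comm, Nat.add_sub_cancel, mul_one] at h
  have hchoose (i : ℕ) : ((n + 1).choose i : 𝕜) * (n + 1 - i : ℕ) = (n + 1) * n.choose i := by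
    have h := congrArg (Nat.cast : ℕ → 𝕜) (Nat.choose_mul_succ_eq n i)
    push_cast at h
    linear_combination -h
  refine ((hasDerivAt_pow (n + 1) y).fun_add
    (HasDerivAt.fun_sum (u := Icc 1 (n + 1)) fun i _ ↦ hterm i)).congr_deriv ?_
  rw [sum_Icc_succ_top (by omega : 1 ≤ n + 1), abelSum]
  simp only [Nat.sub_self, Nat.cast_zero, zero_mul, mul_zero, add_zero, Nat.add_sub_cancel,
    Nat.cast_succ, mul_add, mul_sum]
  congr 1
  refine sum_congr rfl fun i _ ↦ ?_
  linear_combination x * (x + i) ^ (i - 1) * (y - i) ^ (n - i) * hchoose i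

end

theorem eq_of_hasDerivAt_eq {𝕜 G : Type*} [RCLike 𝕜] [NormedAddCommGroup G] [NormedSpace 𝕜 G]
    {f g f' : 𝕜 → G} (hf : ∀ z, HasDerivAt f (f' z) z) (hg : ∀ z, HasDerivAt g (f' z) z)
    {a : 𝕜} (ha : f a = g a) : f = g :=
  eq_of_fderiv_eq (fun z ↦ (hf z).differentiableAt) (fun z ↦ (hg z).differentiableAt)
    (fun z ↦ (hf z).hasFDerivAt.fderiv.trans (hg z).hasFDerivAt.fderiv.symm) a ha

theorem abelSum_eq_add_pow {𝕜 : Type*} [RCLike 𝕜] (n : ℕ) (x y : 𝕜) :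
    abelSum n x y = (x + y) ^ n := by
  induction n generalizing y with
  | zero => simp [abelSum]
  | succ n ih =>
    have hpow (z : 𝕜) : HasDerivAt (fun y ↦ (x + y) ^ (n + 1)) ((n + 1) * abelSum n x z) z := by
      simpa [ih] using ((hasDerivAt_id z).const_add x).fun_pow (n + 1)
    refine congrFun (eq_of_hasDerivAt_eq (hasDerivAt_abelSum_succ n x) hpow (a := -x) ?_) y
    rw [abelSum_succ_neg_self, add_neg_cancel, zero_pow n.succ_ne_zero]

/-- Abel's identity: for every `n ≥ 0` and all real `x`, `y`,
`(x+y)ⁿ = yⁿ + ∑_{i=1}^{n} C(n,i)·x·(x+i)^{i−1}·(y−i)^{n−i}`. -/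
theorem abel_identity (n : ℕ) (x y : ℝ) :
    (x + y) ^ n =
      y ^ n + ∑ i ∈ Finset.Icc 1 n,
        (n.choose i : ℝ) * x * (x + (i : ℝ)) ^ (i - 1) * (y - (i : ℝ)) ^ (n - i) :=
  (abelSum_eq_add_pow n x y).symm
end

section
/- Let p ≥ 1 be an integer and let c_p(x) be the unique formal power series over ℚ with constant term 1 satisfying c_p = 1 + x·c_p^p (the generating function for the Fuss–Catalan numbers of order p). Then for every positive integer k and every integer n ≥ 0, [x^n] c_p(x)^k = (k/(pn+k)) · C(pn+k, n), where C(a,b) is the ordinary binomial coefficient. -/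
/-!
Multiplying `c = 1 + X·cᵖ` by `cᵏ` gives `c^(k+1) = cᵏ + X·c^(p+k)`, so the coefficients
`a(k, n) = [xⁿ] cᵏ` satisfy `a(k+1, n+1) = a(k, n+1) + a(p+k, n)`. The closed form
`k/(pn+k)·C(pn+k, n)` obeys the same recurrence (a rational identity once `C(N, n+1)` and
`C(N+1, n+1)` are written as multiples of `C(N, n)`, where `N = p(n+1) + k`) and the same
boundary values `a(k, 0) = 1`, `a(0, n+1) = 0`, so the two agree by induction on `n` and then
on `k`.
-/

open PowerSeries

def fussCatalan (p k n : ℕ) : ℚ :=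
  ((k : ℚ) / ((p * n + k : ℕ) : ℚ)) * (((p * n + k).choose n : ℕ) : ℚ)

theorem fussCatalan_zero_right {k : ℕ} (hk : k ≠ 0) (p : ℕ) : fussCatalan p k 0 = 1 := by
  simp [fussCatalan, hk]

theorem fussCatalan_zero_left (p n : ℕ) : fussCatalan p 0 n = 0 := by
  simp [fussCatalan]

theorem fussCatalan_succ_succ {p : ℕ} (hp : 1 ≤ p) (k n : ℕ) :
    fussCatalan p (k + 1) (n + 1) = fussCatalan p k (n + 1) + fussCatalan p (p + k) n := by
  unfold fussCatalan
  rw [show p * n + (p + k) = p * (n + 1) + k by ring,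
    show p * (n + 1) + (k + 1) = p * (n + 1) + k + 1 by ring]
  set N := p * (n + 1) + k with hN
  have hnN : n + 1 ≤ N := by nlinarith
  have hNq : (N : ℚ) = p * (n + 1) + k := by rw [hN]; push_cast; ring
  have h_choose_succ : (N.choose (n + 1) : ℚ) = N.choose n * (N - n) / (n + 1) := by
    rw [eq_div_iff (by positivity), ← Nat.cast_sub (by omega)]
    exact_mod_cast Nat.choose_succ_right_eq N n
  have h_succ_choose : ((N + 1).choose (n + 1) : ℚ) = (N + 1) * N.choose n / (n + 1) := by
    rw [eq_div_iff (by positivity)]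
    exact_mod_cast (Nat.add_one_mul_choose_eq N n).symm
  have hN0 : (N : ℚ) ≠ 0 := by positivity
  push_cast
  rw [h_choose_succ, h_succ_choose]
  field_simp
  linear_combination (N.choose n : ℚ) * hNq

section FunctionalEquation

variable {R : Type*} [CommSemiring R] {p : ℕ} {c : R⟦X⟧}

theorem constantCoeff_eq_one_of_eq_one_add_X_mul_pow (hc : c = 1 + X * c ^ p) :
    constantCoeff c = 1 := by
  rw [hc]; simp

theorem pow_succ_eq_pow_add_X_mul_pow (hc : c = 1 + X * c ^ p) (k : ℕ) :
    c ^ (k + 1) = c ^ k + X * c ^ (p + k) := by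
  calc c ^ (k + 1) = c ^ k * (1 + X * c ^ p) := by rw [pow_succ, ← hc]
    _ = c ^ k + X * c ^ (p + k) := by ring

theorem coeff_succ_pow_succ (hc : c = 1 + X * c ^ p) (n k : ℕ) :
    coeff (n + 1) (c ^ (k + 1)) = coeff (n + 1) (c ^ k) + coeff n (c ^ (p + k)) := by
  rw [pow_succ_eq_pow_add_X_mul_pow hc, map_add, coeff_succ_X_mul]

end FunctionalEquation

theorem coeff_pow_eq_fussCatalan {p : ℕ} (hp : 1 ≤ p) {c : ℚ⟦X⟧} (hc : c = 1 + X * c ^ p) :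
    ∀ n k : ℕ, 1 ≤ n + k → coeff n (c ^ k) = fussCatalan p k n := by
  intro n
  induction n with
  | zero =>
    intro k hk
    rw [coeff_zero_eq_constantCoeff_apply, map_pow,
      constantCoeff_eq_one_of_eq_one_add_X_mul_pow hc, one_pow,
      fussCatalan_zero_right (by omega)]
  | succ n ihn =>
    intro k _
    induction k with
    | zero => rw [pow_zero, coeff_one, if_neg n.succ_ne_zero, fussCatalan_zero_left]
    | succ k ihk =>
      rw [coeff_succ_pow_succ hc, ihk (by omega), ihn (p + k) (by omega),
        fussCatalan_succ_succ hp]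

theorem fuss_catalan_coeff_general (p : ℕ) (hp : 1 ≤ p) (c : PowerSeries ℚ)
    (hc : c = 1 + X * c ^ p)
    (k : ℕ) (hk : 1 ≤ k) (n : ℕ) :
    coeff n (c ^ k) =
      ((k : ℚ) / ((p * n + k : ℕ) : ℚ)) * (((p * n + k).choose n : ℕ) : ℚ) :=
  coeff_pow_eq_fussCatalan hp hc n k (by omega)

/-- Fuss–Catalan numbers: if `c_p` is the unique power series over `ℚ` with constant
term `1` satisfying `c_p = 1 + x·c_pᵖ` (`p ≥ 1`), then for `k ≥ 1` and `n ≥ 0`,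
`[xⁿ] c_p^k = (k/(pn+k))·C(pn+k, n)`. -/
theorem fuss_catalan_coeff (p : ℕ) (hp : 1 ≤ p) (c : PowerSeries ℚ)
    (hc0 : constantCoeff c = 1) (hc : c = 1 + X * c ^ p)
    (k : ℕ) (hk : 1 ≤ k) (n : ℕ) :
    coeff n (c ^ k) =
      ((k : ℚ) / ((p * n + k : ℕ) : ℚ)) * (((p * n + k).choose n : ℕ) : ℚ) :=
  fuss_catalan_coeff_general p hp c hc k hk n
end

section
/- (Rothe–Hagen identity.) For all positive integers k, l, every nonnegative integer p, and every integer n ≥ 0, Σ_{i+j=n, i,j≥0} (k/(pi+k))·C(pi+k, i) · (l/(pj+l))·C(pj+l, j) = ((k+l)/(pn+k+l)) · C(pn+k+l, n), as an identity of rational numbers, where C(a,b) is the ordinary binomial coefficient. -/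
/-!
Write `A_n(k) = k/(pn+k) · C(pn+k, n)`. Pascal's rule and `(t+1) C(D+1, t+1) = (D+1) C(D, t)`
give the recurrence `A_{t+1}(k+1) = A_{t+1}(k) + A_t(k+p)`, and `A_n(0)` is `1` at `n = 0` and
`0` otherwise. The convolution `∑_{i+j=n} A_i(k) A_j(l)` obeys the same recurrence and initial
values in `k`, so it equals `A_n(k+l)` by induction on `n` and then on `k`.
-/

open Finset

/-- The value at `n = 0` is set to `1` so that it is also right for `k = 0`, where the formula
gives `0 / 0 = 0`. -/
noncomputable def rotheHagenCoeff (p k n : ℕ) : ℚ :=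
  if n = 0 then 1 else (k : ℚ) / ((p * n + k : ℕ) : ℚ) * (((p * n + k).choose n : ℕ) : ℚ)

section

variable {p : ℕ}

@[simp]
lemma rotheHagenCoeff_zero_right (k : ℕ) : rotheHagenCoeff p k 0 = 1 := if_pos rfl

@[simp]
lemma rotheHagenCoeff_zero_succ (t : ℕ) : rotheHagenCoeff p 0 (t + 1) = 0 := by
  simp [rotheHagenCoeff]

lemma rotheHagenCoeff_eq_of_ne_zero {k n : ℕ} (h : p * n + k ≠ 0) :
    rotheHagenCoeff p k n =
      (k : ℚ) / ((p * n + k : ℕ) : ℚ) * (((p * n + k).choose n : ℕ) : ℚ) := by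
  rcases Nat.eq_zero_or_pos n with rfl | hn
  · have hk : (k : ℚ) ≠ 0 := by simpa using h
    simp [rotheHagenCoeff, hk]
  · exact if_neg hn.ne'

lemma rotheHagenCoeff_succ_succ (k t : ℕ) :
    rotheHagenCoeff p (k + 1) (t + 1) =
      rotheHagenCoeff p k (t + 1) + rotheHagenCoeff p (k + p) t := by
  obtain ⟨D, hD⟩ : ∃ D, p * (t + 1) + k = D := ⟨_, rfl⟩
  rcases Nat.eq_zero_or_pos D with rfl | hD0
  · obtain ⟨rfl, rfl⟩ : p = 0 ∧ k = 0 := by simpa using hD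
    cases t <;> simp [rotheHagenCoeff, Nat.choose_eq_zero_of_lt]
  have hD' : p * t + (k + p) = D := by rw [← hD]; ring
  rw [rotheHagenCoeff_eq_of_ne_zero (by omega), rotheHagenCoeff_eq_of_ne_zero (by omega),
    rotheHagenCoeff_eq_of_ne_zero (hD'.trans_ne hD0.ne'),
    show p * (t + 1) + (k + 1) = D + 1 by omega, hD', hD]
  have pascal :
      (((D + 1).choose (t + 1) : ℕ) : ℚ) = (D.choose t : ℕ) + (D.choose (t + 1) : ℕ) :=
    mod_cast Nat.choose_succ_succ' D t
  have absorb :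
      ((D + 1 : ℕ) : ℚ) * (D.choose t : ℕ) = ((D + 1).choose (t + 1) : ℕ) * (t + 1 : ℕ) :=
    mod_cast Nat.add_one_mul_choose_eq D t
  have hDq : (D : ℚ) = p * (t + 1) + k := by rw [← hD]; push_cast; ring
  have hDq0 : (D : ℚ) ≠ 0 := by positivity
  rw [pascal] at absorb ⊢
  push_cast at absorb ⊢
  field_simp
  linear_combination
    (-(p : ℚ)) * absorb + (((D.choose t : ℕ) : ℚ) + (D.choose (t + 1) : ℕ)) * hDq

lemma sum_antidiagonal_rotheHagenCoeff_mul (n k l : ℕ) :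
    ∑ ij ∈ antidiagonal n, rotheHagenCoeff p k ij.1 * rotheHagenCoeff p l ij.2 =
      rotheHagenCoeff p (k + l) n := by
  induction n generalizing k l with
  | zero => simp
  | succ t ih =>
    induction k with
    | zero => simp [Nat.sum_antidiagonal_succ]
    | succ k ihk =>
      simp only [Nat.sum_antidiagonal_succ, rotheHagenCoeff_succ_succ, add_mul, sum_add_distrib,
        rotheHagenCoeff_zero_right] at ihk ⊢
      rw [← add_assoc, ihk, ih, add_right_comm k 1 l, rotheHagenCoeff_succ_succ,
        add_right_comm k p l]

end

/-- The Rothe–Hagen identity: for positive integers `k`, `l`, nonnegative integer `p`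
and `n ≥ 0`,
`∑_{i+j=n} (k/(pi+k))·C(pi+k,i)·(l/(pj+l))·C(pj+l,j) = ((k+l)/(pn+k+l))·C(pn+k+l,n)`
as rational numbers. -/
theorem rothe_hagen (k l : ℕ) (hk : 1 ≤ k) (hl : 1 ≤ l) (p n : ℕ) :
    ∑ i ∈ Finset.range (n + 1),
        ((k : ℚ) / ((p * i + k : ℕ) : ℚ)) * (((p * i + k).choose i : ℕ) : ℚ) *
          (((l : ℚ) / ((p * (n - i) + l : ℕ) : ℚ)) *
            (((p * (n - i) + l).choose (n - i) : ℕ) : ℚ)) =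
      (((k + l : ℕ) : ℚ) / ((p * n + k + l : ℕ) : ℚ)) *
        (((p * n + k + l).choose n : ℕ) : ℚ) := by
  calc _ = ∑ i ∈ range (n + 1), rotheHagenCoeff p k i * rotheHagenCoeff p l (n - i) :=
        sum_congr rfl fun i _ => by
          rw [rotheHagenCoeff_eq_of_ne_zero (by omega), rotheHagenCoeff_eq_of_ne_zero (by omega)]
    _ = rotheHagenCoeff p (k + l) n := by
        rw [← Nat.sum_antidiagonal_eq_sum_range_succ (fun i j => _ * _),
          sum_antidiagonal_rotheHagenCoeff_mul]
    _ = _ := by rw [rotheHagenCoeff_eq_of_ne_zero (by omega), add_assoc]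
end

section
/- (Jensen's formula.) Define the generalized binomial coefficient C(a, m) = a(a−1)⋯(a−m+1)/m! for a real number a and a nonnegative integer m. Then for all real numbers j and r, every positive integer p, and every integer n ≥ 0, Σ_{l=0}^{n} C(j+pl, l) · C(r−pl, n−l) = Σ_{i=0}^{n} C(j+r−i, n−i) · p^i. -/
/-!
Split off the `l = 0` term and write `C(j + p(l+1), l+1) = A_{l+1}(j) + p · C(j + p - 1 + pl, l)`
with the Rothe coefficient `A_k(x) = x / (x + pk) · C(x + pk, k)`. The `A`-part of the sum is
`C(j + r, n)` by the Hagen–Rothe identity `∑ₖ A_k(x) C(y - pk, n - k) = C(x + y, n)`, and the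
remainder is `p` times the same sum for `(j + p - 1, r - p, n - 1)`, so induction on `n` gives the
right-hand side. Hagen–Rothe is proved for `x ∈ ℕ` by induction on `x` (Pascal's rule shifts
`x` by one) and extends to all `x` because both sides are polynomials in `x`.
-/

open Finset Polynomial

/-- The generalized binomial coefficient `C(a, m) = a(a−1)⋯(a−m+1)/m!` for a real
number `a` and a natural number `m`, with `C(a, 0) = 1`. -/
noncomputable def genChoose (a : ℝ) (m : ℕ) : ℝ :=
  (∏ i ∈ Finset.range m, (a - (i : ℝ))) / (m.factorial : ℝ)

lemma genChoose_eq_choose (a : ℝ) (m : ℕ) : genChoose a m = Ring.choose a m := by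
  rw [Ring.choose_eq_smul, genChoose, ← descPochhammer_eval_eq_prod_range, smul_eq_mul,
    inv_mul_eq_div, ← aeval_eq_smeval, aeval_def, ← eval_map, descPochhammer_map]

section BinomialRing

variable {R : Type*} [CommRing R] [BinomialRing R]

lemma Ring.succ_nsmul_choose_succ (a : R) (k : ℕ) :
    (k + 1) • Ring.choose a (k + 1) = a * Ring.choose (a - 1) k := by
  simpa [Ring.choose_one_right] using Ring.choose_smul_choose a (Nat.le_add_left 1 k)

lemma Ring.choose_mul_succ_self (a : R) (k : ℕ) :
    Ring.choose (a * (k + 1)) (k + 1) = a * Ring.choose (a * (k + 1) - 1) k := by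
  have := BinomialRing.toIsAddTorsionFree (R := R)
  rw [← nsmul_right_inj k.succ_ne_zero, Ring.succ_nsmul_choose_succ, nsmul_eq_mul]
  push_cast
  ring

/-- The coefficient `x / (x + p k) * C(x + p k, k)` of the Hagen–Rothe identity, written without
division. -/
noncomputable def rotheCoeff (p x : R) : ℕ → R
  | 0 => 1
  | k + 1 => Ring.choose (x + p * (k + 1)) (k + 1) - p * Ring.choose (x + p * (k + 1) - 1) k

lemma map_rotheCoeff {S F : Type*} [CommRing S] [BinomialRing S] [FunLike F R S]
    [RingHomClass F R S] (f : F) (p x : R) (k : ℕ) :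
    f (rotheCoeff p x k) = rotheCoeff (f p) (f x) k := by
  cases k <;> simp [rotheCoeff, Ring.map_choose]

lemma rotheCoeff_zero_succ (p : R) (k : ℕ) : rotheCoeff p 0 (k + 1) = 0 := by
  rw [rotheCoeff, zero_add, Ring.choose_mul_succ_self, sub_self]

lemma rotheCoeff_add_one_succ (p x : R) (k : ℕ) :
    rotheCoeff p (x + 1) (k + 1) = rotheCoeff p x (k + 1) + rotheCoeff p (x + p) k := by
  cases k with
  | zero => simp [rotheCoeff]
  | succ k =>
    simp only [rotheCoeff]
    have pascal₁ := Ring.choose_succ_succ (x + p * (k + 1 + 1)) (k + 1)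
    have pascal₂ := Ring.choose_succ_succ (x + p * (k + 1 + 1) - 1) k
    push_cast
    ring_nf at pascal₁ pascal₂ ⊢
    linear_combination pascal₁ - p * pascal₂

lemma choose_add_mul_succ_eq_rotheCoeff_add (p x : R) (k : ℕ) :
    Ring.choose (x + p * (k + 1)) (k + 1) =
      rotheCoeff p x (k + 1) + p * Ring.choose (x + p - 1 + p * k) k := by
  rw [rotheCoeff, show x + p - 1 + p * k = x + p * (k + 1) - 1 by ring]
  ring

noncomputable def rotheSum (p x y : R) (n : ℕ) : R :=
  ∑ k ∈ range (n + 1), rotheCoeff p x k * Ring.choose (y - p * k) (n - k)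

lemma map_rotheSum {S F : Type*} [CommRing S] [BinomialRing S] [FunLike F R S]
    [RingHomClass F R S] (f : F) (p x y : R) (n : ℕ) :
    f (rotheSum p x y n) = rotheSum (f p) (f x) (f y) n := by
  simp [rotheSum, map_rotheCoeff, Ring.map_choose]

lemma rotheSum_zero_left (p y : R) (n : ℕ) : rotheSum p 0 y n = Ring.choose y n := by
  rw [rotheSum, sum_range_succ', sum_eq_zero fun k _ ↦ by rw [rotheCoeff_zero_succ, zero_mul]]
  simp [rotheCoeff]

lemma rotheSum_add_one_succ (p x y : R) (n : ℕ) :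
    rotheSum p (x + 1) y (n + 1) = rotheSum p x y (n + 1) + rotheSum p (x + p) (y - p) n := by
  have shift (k : ℕ) : y - p * ((k + 1 : ℕ) : R) = y - p - p * k := by push_cast; ring
  simp only [rotheSum, sum_range_succ' _ (n + 1), rotheCoeff_add_one_succ, add_mul, sum_add_distrib,
    Nat.add_sub_add_right, shift]
  simp only [rotheCoeff, Nat.cast_zero, mul_zero, sub_zero, Nat.sub_zero]
  ring

lemma sum_choose_mul_choose_eq_rotheSum_add (p x y : R) (n : ℕ) :
    ∑ l ∈ range (n + 2), Ring.choose (x + p * l) l * Ring.choose (y - p * l) (n + 1 - l) =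
      rotheSum p x y (n + 1) + p * ∑ l ∈ range (n + 1),
        Ring.choose (x + p - 1 + p * l) l * Ring.choose (y - p - p * l) (n - l) := by
  have shift (k : ℕ) : y - p * (k + 1) = y - p - p * k := by ring
  simp only [rotheSum, sum_range_succ' _ (n + 1), Nat.cast_add, Nat.cast_one,
    choose_add_mul_succ_eq_rotheCoeff_add, add_mul, sum_add_distrib, mul_sum, Nat.add_sub_add_right,
    shift]
  simp only [rotheCoeff, Nat.cast_zero, mul_zero, sub_zero, Nat.sub_zero, Ring.choose_zero_right,
    mul_assoc]
  ring

end BinomialRing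

lemma Polynomial.eq_of_eval_natCast_eq {R : Type*} [CommRing R] [IsDomain R] [CharZero R]
    {P Q : R[X]} (h : ∀ m : ℕ, P.eval (m : R) = Q.eval (m : R)) : P = Q :=
  eq_of_infinite_eval_eq P Q <| (Set.infinite_range_of_injective Nat.cast_injective).mono <| by
    rintro _ ⟨m, rfl⟩
    exact h m

section Field

variable {K : Type*} [Field K] [CharZero K]

theorem rotheSum_eq_choose (p x y : K) (n : ℕ) : rotheSum p x y n = Ring.choose (x + y) n := by
  induction n generalizing x y with
  | zero => simp [rotheSum, rotheCoeff]
  | succ n ih =>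
    have at_natCast (m : ℕ) : rotheSum p m y (n + 1) = Ring.choose (m + y) (n + 1) := by
      induction m with
      | zero => simpa using rotheSum_zero_left p y (n + 1)
      | succ m ihm =>
        rw [Nat.cast_succ, rotheSum_add_one_succ, ihm, ih,
          show (m : K) + p + (y - p) = m + y by ring, add_right_comm, Ring.choose_succ_succ,
          add_comm]
    have hpoly : rotheSum (C p) X (C y) (n + 1) = Ring.choose (X + C y) (n + 1) :=
      Polynomial.eq_of_eval_natCast_eq fun m ↦ by
        rw [← coe_evalRingHom, map_rotheSum, Ring.map_choose, map_add]
        simpa using at_natCast m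
    have hx := congrArg (evalRingHom x) hpoly
    rw [map_rotheSum, Ring.map_choose, map_add] at hx
    simpa using hx

theorem sum_choose_mul_choose_eq (p j r : K) (n : ℕ) :
    ∑ l ∈ range (n + 1), Ring.choose (j + p * l) l * Ring.choose (r - p * l) (n - l) =
      ∑ i ∈ range (n + 1), Ring.choose (j + r - i) (n - i) * p ^ i := by
  induction n generalizing j r with
  | zero => simp
  | succ n ih =>
    rw [sum_choose_mul_choose_eq_rotheSum_add, rotheSum_eq_choose, ih,
      show j + p - 1 + (r - p) = j + r - 1 by ring, sum_range_succ' _ (n + 1), mul_sum, add_comm]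
    congr 1
    · refine sum_congr rfl fun i _ ↦ ?_
      rw [Nat.add_sub_add_right, Nat.cast_succ, sub_add_eq_sub_sub_swap, pow_succ]
      ring
    · simp

end Field

theorem jensen_formula_general (j r : ℝ) (p : ℕ) (n : ℕ) :
    ∑ l ∈ Finset.range (n + 1),
        genChoose (j + (p : ℝ) * (l : ℝ)) l * genChoose (r - (p : ℝ) * (l : ℝ)) (n - l) =
      ∑ i ∈ Finset.range (n + 1), genChoose (j + r - (i : ℝ)) (n - i) * (p : ℝ) ^ i := by
  simp only [genChoose_eq_choose]
  exact sum_choose_mul_choose_eq (p : ℝ) j r n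

/-- Jensen's formula: for all real `j`, `r`, every positive integer `p` and `n ≥ 0`,
`∑_{l=0}^{n} C(j+pl, l)·C(r−pl, n−l) = ∑_{i=0}^{n} C(j+r−i, n−i)·pⁱ`. -/
theorem jensen_formula (j r : ℝ) (p : ℕ) (hp : 1 ≤ p) (n : ℕ) :
    ∑ l ∈ Finset.range (n + 1),
        genChoose (j + (p : ℝ) * (l : ℝ)) l * genChoose (r - (p : ℝ) * (l : ℝ)) (n - l) =
      ∑ i ∈ Finset.range (n + 1), genChoose (j + r - (i : ℝ)) (n - i) * (p : ℝ) ^ i :=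
  jensen_formula_general j r p n
end

section
/- Let p ≥ 2 be an integer and let i and j be nonnegative integers with i < j. Then the formal power series Σ_{n≥0} ((pn+i)! / (n!·((p−1)n+j)!)) · x^n · (1+x)^{−(pn+i+1)} over ℚ is a polynomial in x of degree exactly j−i−1, where (1+x)^{−(pn+i+1)} denotes the inverse of the power series (1+x)^{pn+i+1} in ℚ[[x]]. -/
open PowerSeries

/-!
Since `[x^r] (1+x)^{-(N+1)} = (-1)^r C(N+r, r)`, the coefficient of `x^m` in the series is
`(1/m!) Σ_{n ≤ m} (-1)^{m-n} C(m,n) g_m(n)` with `g_m(n) = ((p-1)n+i+m)! / ((p-1)n+j)!`, i.e.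
`1/m!` times the `m`-th forward difference of `g_m` at `0`.  For `m ≥ j - i`, `g_m` is a
polynomial in `n` of degree `m + i - j < m`, so its `m`-th difference vanishes.  For
`m = j - i - 1`, `g_m(n) = 1/((p-1)n+j)`, whose `m`-th difference at `0` is
`(-1)^m m! (p-1)^m / ∏_{t ≤ m} ((p-1)t+j) ≠ 0`.
-/

open Finset Nat fwdDiff

theorem PowerSeries.coeff_inv_one_add_X_pow {K : Type*} [Field K] (k r : ℕ) :
    coeff r ((1 + X : K⟦X⟧) ^ (k + 1))⁻¹ = (-1) ^ r * (k + r).choose r := by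
  have hinv : ((1 + X : K⟦X⟧) ^ (k + 1))⁻¹ = rescale (-1 : K) (invOneSubPow K (k + 1)).val := by
    rw [eq_comm, eq_inv_iff_mul_eq_one (by simp)]
    have : rescale (-1 : K) (1 - X) = 1 + X := by simp [rescale_X, sub_eq_add_neg]
    rw [← this, ← map_pow, ← map_mul, ← invOneSubPow_inv_eq_one_sub_pow, Units.val_inv, map_one]
  rw [hinv, coeff_rescale, invOneSubPow_val_succ_eq_mk_add_choose, coeff_mk, Nat.choose_symm_add]

theorem PowerSeries.exists_polynomial_degree_eq_of_coeff {R : Type*} [Semiring R] (f : R⟦X⟧)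
    {d : ℕ} (hd : coeff d f ≠ 0) (h : ∀ m, d < m → coeff m f = 0) :
    ∃ q : Polynomial R, q.degree = d ∧ f = q := by
  refine ⟨trunc (d + 1) f, ?_, ?_⟩
  · refine Polynomial.degree_eq_of_le_of_coeff_ne_zero ?_ (by simpa [coeff_trunc] using hd)
    exact Order.le_of_lt_succ (degree_trunc_lt f (d + 1))
  · ext m
    rw [Polynomial.coeff_coe, coeff_trunc]
    split_ifs with hm
    · rfl
    · exact h m (by omega)

theorem fwdDiff_iter_eq_sum_mul {R : Type*} [Ring R] (f : R → R) (m : ℕ) :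
    Δ_[1] ^[m] f 0 = ∑ k ∈ range (m + 1), (-1) ^ (m - k) * m.choose k * f k := by
  simp [fwdDiff_iter_eq_sum_shift, zsmul_eq_mul]

theorem fwdDiff_iter_inv_linear {K : Type*} [Field K] [LinearOrder K] [IsStrictOrderedRing K]
    {a b : K} (ha : 0 ≤ a) (hb : 0 < b) (m : ℕ) {x : K} (hx : 0 ≤ x) :
    Δ_[1] ^[m] (fun x ↦ (a * x + b)⁻¹) x
      = (-1) ^ m * m ! * a ^ m / ∏ t ∈ range (m + 1), (a * (x + t) + b) := by
  induction m generalizing x with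
  | zero => simp
  | succ m ih =>
    rw [Function.iterate_succ_apply', fwdDiff, ih (by positivity), ih hx]
    set A := ∏ t ∈ range (m + 1), (a * (x + t) + b)
    set B := ∏ t ∈ range (m + 1), (a * (x + 1 + t) + b)
    have hA : 0 < A := prod_pos fun t _ => by positivity
    have hB : 0 < B := prod_pos fun t _ => by positivity
    have hAD : ∏ t ∈ range (m + 1 + 1), (a * (x + t) + b) = A * (a * (x + (m + 1)) + b) := by
      rw [prod_range_succ]; push_cast; ring
    have hBD : ∏ t ∈ range (m + 1 + 1), (a * (x + t) + b) = (a * x + b) * B := by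
      rw [prod_range_succ', mul_comm]
      congr 1
      · simp
      · exact prod_congr rfl fun t _ => by push_cast; ring
    rw [div_sub_div _ _ hB.ne' hA.ne', div_eq_div_iff (by positivity) (hAD ▸ by positivity)]
    push_cast [factorial_succ]
    linear_combination (-1) ^ m * m ! * a ^ m * (A * hBD - B * hAD)

theorem factorial_add_div_factorial_eq_descPochhammer_eval {K : Type*} [Field K] [CharZero K]
    (N d : ℕ) :
    ((N + d)! : K) / N ! = (descPochhammer K d).eval ((N + d : ℕ) : K) := by
  rw [descPochhammer_eval_eq_descFactorial, div_eq_iff (Nat.cast_ne_zero.mpr N.factorial_ne_zero),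
    mul_comm, ← Nat.cast_mul, ← factorial_mul_descFactorial (le_add_left d N), Nat.add_sub_cancel]

noncomputable def fussCatalanSeries (p i j : ℕ) : ℚ⟦X⟧ :=
  PowerSeries.mk fun m =>
    ∑ n ∈ range (m + 1), ((p * n + i)! : ℚ) / (n ! * ((p - 1) * n + j)!) *
      coeff m (X ^ n * ((1 + X : ℚ⟦X⟧) ^ (p * n + i + 1))⁻¹)

section FussCatalanSeries

variable {p i j m n : ℕ}

theorem fussCatalanSeries_term (hp : 1 ≤ p) (hn : n ≤ m) :
    ((p * n + i)! : ℚ) / (n ! * ((p - 1) * n + j)!) *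
        coeff m (X ^ n * ((1 + X : ℚ⟦X⟧) ^ (p * n + i + 1))⁻¹)
      = (m ! : ℚ)⁻¹ *
        ((-1) ^ (m - n) * m.choose n * (((p - 1) * n + i + m)! / ((p - 1) * n + j)!)) := by
  have hE : p * n + i + (m - n) = (p - 1) * n + i + m := by
    have : p * n = (p - 1) * n + n := by
      rw [← Nat.succ_mul, Nat.succ_eq_add_one, Nat.sub_add_cancel hp]
    omega
  rw [coeff_X_pow_mul', if_pos hn, coeff_inv_one_add_X_pow, ← hE, Nat.cast_choose ℚ hn,
    Nat.cast_choose ℚ (le_add_left (m - n) (p * n + i)), Nat.add_sub_cancel]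
  field_simp

theorem coeff_fussCatalanSeries (hp : 1 ≤ p) (f : ℚ → ℚ)
    (hf : ∀ n ≤ m, f n = ((((p - 1) * n + i + m)! : ℚ) / ((p - 1) * n + j)!)) :
    coeff m (fussCatalanSeries p i j) = (m ! : ℚ)⁻¹ * Δ_[1] ^[m] f 0 := by
  rw [fussCatalanSeries, coeff_mk, fwdDiff_iter_eq_sum_mul, mul_sum]
  refine sum_congr rfl fun n hn => ?_
  have hnm : n ≤ m := mem_range_succ_iff.mp hn
  rw [fussCatalanSeries_term hp hnm, hf n hnm]

theorem coeff_fussCatalanSeries_eq_zero (hp : 1 ≤ p) (hij : i < j) (hm : j - i ≤ m) :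
    coeff m (fussCatalanSeries p i j) = 0 := by
  obtain ⟨d, hd⟩ : ∃ d, m + i = j + d := ⟨m + i - j, by omega⟩
  set P : Polynomial ℚ := (descPochhammer ℚ d).comp
    (Polynomial.C ((p - 1 : ℕ) : ℚ) * Polynomial.X + Polynomial.C ((j + d : ℕ) : ℚ))
  have hP : P.natDegree < m := by
    calc P.natDegree ≤ d * 1 :=
          Polynomial.natDegree_comp_le.trans
            (Nat.mul_le_mul (descPochhammer_natDegree ℚ d).le Polynomial.natDegree_linear_le)
      _ < m := by omega
  rw [coeff_fussCatalanSeries hp P.eval, Polynomial.fwdDiff_iter_eq_zero_of_degree_lt hP,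
    Pi.zero_apply, mul_zero]
  intro n _
  have hN : (p - 1) * n + i + m = (p - 1) * n + j + d := by omega
  rw [hN, factorial_add_div_factorial_eq_descPochhammer_eval]
  simp [P, add_assoc]

theorem coeff_fussCatalanSeries_ne_zero (hp : 2 ≤ p) (hij : i < j) :
    coeff (j - i - 1) (fussCatalanSeries p i j) ≠ 0 := by
  have ha : (0 : ℚ) < (p - 1 : ℕ) := by exact_mod_cast (by omega : 0 < p - 1)
  have hb : (0 : ℚ) < j := by exact_mod_cast (by omega : 0 < j)
  rw [coeff_fussCatalanSeries (by omega) (fun x => ((p - 1 : ℕ) * x + j)⁻¹),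
    fwdDiff_iter_inv_linear ha.le hb _ le_rfl]
  · have hden := prod_pos fun t (_ : t ∈ range (j - i - 1 + 1)) =>
      add_pos_of_nonneg_of_pos (by positivity : (0 : ℚ) ≤ (p - 1 : ℕ) * (0 + t)) hb
    refine mul_ne_zero (by positivity) (div_ne_zero ?_ hden.ne')
    exact mul_ne_zero (mul_ne_zero (pow_ne_zero _ (by norm_num)) (by positivity))
      (pow_ne_zero _ ha.ne')
  · intro n _
    have hN : (p - 1) * n + j = (p - 1) * n + i + (j - i - 1) + 1 := by omega
    have hN' : ((p - 1 : ℕ) : ℚ) * n + j = (((p - 1) * n + j : ℕ) : ℚ) := by push_cast; ring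
    rw [hN', hN, factorial_succ]
    push_cast
    field_simp

end FussCatalanSeries

/-- For `p ≥ 2` and nonnegative integers `i < j`, the power series
`∑_{n≥0} ((pn+i)!/(n!·((p−1)n+j)!))·xⁿ·(1+x)^{−(pn+i+1)}` over `ℚ` is a polynomial in
`x` of degree exactly `j − i − 1`.  (The `n`-th term has order `n`, so the coefficient
of `x^m` in the sum only receives contributions from `n ≤ m`; the sum is rendered
accordingly.) -/
theorem fuss_catalan_inverse_polynomial (p : ℕ) (hp : 2 ≤ p) (i j : ℕ) (hij : i < j) :
    ∃ q : Polynomial ℚ, q.degree = (j - i - 1 : ℕ) ∧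
      (PowerSeries.mk fun m =>
          ∑ n ∈ Finset.range (m + 1),
            (((p * n + i).factorial : ℚ) /
                ((n.factorial : ℚ) * (((p - 1) * n + j).factorial : ℚ))) *
              coeff (R := ℚ) m (X ^ n * ((1 + X : PowerSeries ℚ) ^ (p * n + i + 1))⁻¹)) =
        (q : PowerSeries ℚ) :=
  exists_polynomial_degree_eq_of_coeff (fussCatalanSeries p i j)
    (coeff_fussCatalanSeries_ne_zero hp hij)
    fun _ hm => coeff_fussCatalanSeries_eq_zero (by omega) hij (by omega)
end

section
/- (Moon's theorem on trees with given degrees.) Let m ≥ 2 be an integer and let d_1, d_2, …, d_m be positive integers. The number of (unrooted, labeled) trees on the vertex set {1, 2, …, m} in which vertex i has degree d_i for every i is the multinomial coefficient (m−2)! / ((d_1−1)!·(d_2−1)!⋯(d_m−1)!) if d_1 + d_2 + ⋯ + d_m = 2(m−1), and is 0 otherwise. -/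
/-
Induction on the number `n` of vertices, in the division-free form
`#trees * ∏ v, (d v - 1)! = (n - 2)!`. Since `∑ d = 2(n - 1) < 2n`, some vertex `i` has
`d i = 1`. Deleting `i` maps the trees in which `i` hangs on `j` bijectively onto the trees on
the remaining vertices in which `j` has degree `d j - 1`: a graph in which `i` is a leaf is a
tree iff it is so after deleting `i`, as connectivity is kept and the numbers of vertices and of
edges both drop by one. By induction the fibre over `j` contributes `(d j - 1) * (n - 3)!` (it
is empty when `d j = 1`), and `∑ j, (d j - 1) = n - 2`. When `∑ d ≠ 2(n - 1)` there is no such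
tree, by the handshake lemma.
-/

open Finset Nat

/- `Fintype.prod_eq_mul_prod_subtype_ne`, restated over the type `↥{i}ᶜ` of `SimpleGraph.induce`,
whose `Fintype` instance differs syntactically. -/
@[to_additive]
lemma Fintype.prod_eq_mul_prod_compl_singleton {V M : Type*} [CommMonoid M] [Fintype V]
    [DecidableEq V] (f : V → M) (i : V) : ∏ v, f v = f i * ∏ v : ({i}ᶜ : Set V), f v :=
  Fintype.prod_eq_mul_prod_subtype_ne f i

lemma Set.eq_singleton_of_ncard_eq_one {α : Type*} {s : Set α} {a : α} (h : s.ncard = 1)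
    (ha : a ∈ s) : s = {a} := by
  obtain ⟨b, rfl⟩ := Set.ncard_eq_one.1 h
  rw [ha]

theorem Nat.card_eq_sum_card_of_existsUnique {α β : Type*} [Finite α] [Fintype β]
    {P : α → Prop} {R : α → β → Prop} (h : ∀ a, P a → ∃! b, R a b) :
    Nat.card {a // P a} = ∑ b, Nat.card {a // P a ∧ R a b} := by
  choose f hf using fun a : {a // P a} ↦ h a a.2
  rw [← Nat.card_congr (Equiv.sigmaFiberEquiv f), Nat.card_sigma]
  refine Finset.sum_congr rfl fun b _ ↦ Nat.card_congr ?_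
  exact (Equiv.subtypeEquivRight fun a ↦
    ⟨fun e ↦ e ▸ (hf a).1, fun r ↦ ((hf a).2 b r).symm⟩).trans
      (Equiv.subtypeSubtypeEquivSubtypeInter P (R · b))

section DegreeSequence

variable {V : Type*} {d : V → ℕ}

lemma one_le_update_pred [DecidableEq V] {j : V} (hd : ∀ v, 1 ≤ d v) (hdj : 2 ≤ d j) (v : V) :
    1 ≤ Function.update d j (d j - 1) v := by
  rcases eq_or_ne v j with rfl | hvj
  · rw [Function.update_self]; omega
  · rw [Function.update_of_ne hvj]; exact hd v

variable [Fintype V]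

lemma exists_eq_one_of_sum_lt (hd : ∀ v, 1 ≤ d v) (h : ∑ v, d v < 2 * Fintype.card V) :
    ∃ v, d v = 1 := by
  by_contra! h1
  have : ∑ _v : V, 2 ≤ ∑ v, d v := Finset.sum_le_sum fun v _ ↦ by
    have := hd v; have := h1 v; omega
  simp only [sum_const, Finset.card_univ, smul_eq_mul] at this
  omega

lemma sum_tsub_one (hd : ∀ v, 1 ≤ d v) : ∑ v, (d v - 1) = ∑ v, d v - Fintype.card V := by
  rw [Finset.sum_tsub_distrib _ fun v _ ↦ hd v]
  simp

variable [DecidableEq V] {i j : V}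

lemma sum_compl_singleton_update_pred_add_two (hdi : d i = 1) (hji : j ≠ i) (hdj : 1 ≤ d j) :
    ∑ v : ({i}ᶜ : Set V), Function.update d j (d j - 1) v + 2 = ∑ v, d v := by
  have h := Fintype.sum_eq_add_sum_compl_singleton (Function.update d j (d j - 1)) i
  rw [Function.update_of_ne hji.symm, hdi, Finset.sum_update_of_mem (mem_univ j)] at h
  have := Finset.sum_eq_add_sum_sdiff_singleton_of_mem (mem_univ j) d
  omega

lemma prod_factorial_eq_mul_prod_compl_singleton_update_pred (hdi : d i = 1) (hji : j ≠ i)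
    (hdj : 2 ≤ d j) :
    ∏ v, (d v - 1)! =
      (d j - 1) * ∏ v : ({i}ᶜ : Set V), (Function.update d j (d j - 1) v - 1)! := by
  have h := Fintype.prod_eq_mul_prod_compl_singleton
    (fun v ↦ (Function.update d j (d j - 1) v - 1)!) i
  simp only [Function.update_of_ne hji.symm, hdi, Nat.sub_self, factorial_zero, one_mul] at h
  rw [← h, ← Finset.mul_prod_erase _ _ (mem_univ j), ← Finset.mul_prod_erase _ _ (mem_univ j),
    Function.update_self, ← mul_assoc, Nat.mul_factorial_pred (by omega)]
  exact congrArg _ (Finset.prod_congr rfl fun v hv ↦ by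
    rw [Function.update_of_ne (ne_of_mem_erase hv)])

end DegreeSequence

namespace SimpleGraph

variable {V : Type*} {G : SimpleGraph V} {i j : V}

lemma connected_iff_induce_compl_singleton (hi : G.neighborSet i = {j}) :
    G.Connected ↔ (G.induce {i}ᶜ).Connected := by
  have hij : G.Adj i j := by rw [← mem_neighborSet, hi]; rfl
  refine ⟨fun h ↦ (connected_iff _).2 ⟨?_, ⟨⟨j, hij.ne'⟩⟩⟩, fun h ↦ ?_⟩
  · refine h.preconnected.induce_of_degree_eq_one fun v hv ↦ ?_
    rw [Set.notMem_compl_iff, Set.mem_singleton_iff] at hv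
    exact hv ▸ hi ▸ Set.subsingleton_singleton
  · have reach_j : ∀ u, G.Reachable u j := fun u ↦ by
      by_cases hu : u = i
      · exact hu ▸ hij.reachable
      · exact (h.preconnected ⟨u, hu⟩ ⟨j, hij.ne'⟩).map (Embedding.induce _).toHom
    exact (connected_iff _).2 ⟨fun u v ↦ (reach_j u).trans (reach_j v).symm, ⟨j⟩⟩

lemma card_edgeSet_induce_compl_singleton_add_one [Fintype V] (hi : G.neighborSet i = {j}) :
    Nat.card (G.induce {i}ᶜ).edgeSet + 1 = Nat.card G.edgeSet := by
  classical
  have hdeg : G.degree i = 1 := by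
    rw [← card_neighborSet_eq_degree, ← Nat.card_eq_fintype_card, Nat.card_coe_set_eq, hi,
      Set.ncard_singleton]
  have hpos : 0 < #G.edgeFinset := Finset.card_pos.2 ⟨s(i, j), by
    rw [mem_edgeFinset, mem_edgeSet, ← mem_neighborSet, hi]; rfl⟩
  rw [Nat.card_eq_fintype_card, ← edgeFinset_card, card_edgeFinset_induce_compl_singleton,
    card_edgeFinset_deleteIncidenceSet, hdeg, Nat.card_eq_fintype_card, ← edgeFinset_card]
  omega

lemma isTree_iff_induce_compl_singleton [Finite V] (hi : G.neighborSet i = {j}) :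
    G.IsTree ↔ (G.induce {i}ᶜ).IsTree := by
  have := Fintype.ofFinite V
  have hcard : Nat.card ({i}ᶜ : Set V) + 1 = Nat.card V := by
    rw [Nat.card_coe_set_eq, Set.ncard_compl, Set.ncard_singleton]
    have : 0 < Nat.card V := Nat.card_pos_iff.2 ⟨⟨i⟩, inferInstance⟩
    omega
  rw [isTree_iff_connected_and_card, isTree_iff_connected_and_card,
    ← connected_iff_induce_compl_singleton hi, ← card_edgeSet_induce_compl_singleton_add_one hi,
    ← hcard, Nat.add_right_cancel_iff]

lemma ncard_neighborSet_induce_compl_singleton (v : ({i}ᶜ : Set V)) :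
    ((G.induce {i}ᶜ).neighborSet v).ncard = (G.neighborSet v \ {i}).ncard := by
  rw [neighborSet_induce, ← Set.ncard_image_of_injective _ Subtype.val_injective,
    Set.image_preimage_eq_inter_range, Subtype.range_coe, Set.sdiff_eq]

lemma forall_ncard_neighborSet_iff_induce_compl_singleton [Finite V] [DecidableEq V] {d : V → ℕ}
    (hi : G.neighborSet i = {j}) (hdi : d i = 1) (hdj : 1 ≤ d j) :
    (∀ v, (G.neighborSet v).ncard = d v) ↔
      ∀ v : ({i}ᶜ : Set V),
        ((G.induce {i}ᶜ).neighborSet v).ncard = Function.update d j (d j - 1) v := by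
  have adj_i : ∀ v, i ∈ G.neighborSet v ↔ v = j := fun v ↦ by
    rw [mem_neighborSet, adj_comm, ← mem_neighborSet, hi, Set.mem_singleton_iff]
  have ncard_sdiff : ∀ v, (G.neighborSet v \ {i}).ncard + (if v = j then 1 else 0) =
      (G.neighborSet v).ncard := fun v ↦ by
    split_ifs with hv
    · exact Set.ncard_sdiff_singleton_add_one ((adj_i v).2 hv)
    · rw [Set.sdiff_singleton_eq_self (mt (adj_i v).1 hv), add_zero]
  simp_rw [ncard_neighborSet_induce_compl_singleton]
  refine ⟨fun h v ↦ ?_, fun h v ↦ ?_⟩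
  · have := ncard_sdiff v
    rcases eq_or_ne (v : V) j with hv | hv <;> simp_all
  · by_cases hv : v = i
    · rw [hv, hi, Set.ncard_singleton, hdi]
    · have := ncard_sdiff v
      have := h ⟨v, hv⟩
      rcases eq_or_ne v j with rfl | hvj <;> simp_all

def attachLeaf (H : SimpleGraph ({i}ᶜ : Set V)) (j : V) : SimpleGraph V :=
  H.map (↑) ⊔ edge i j

lemma induce_attachLeaf (H : SimpleGraph ({i}ᶜ : Set V)) (j : V) :
    (attachLeaf H j).induce {i}ᶜ = H := by
  ext ⟨a, ha⟩ ⟨b, hb⟩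
  simp only [Set.mem_compl_iff, Set.mem_singleton_iff] at ha hb
  simpa [attachLeaf, map_adj', edge_adj, ha, hb, Subtype.exists] using
    fun h : H.Adj _ _ ↦ h.ne ∘ Subtype.ext

lemma neighborSet_attachLeaf (H : SimpleGraph ({i}ᶜ : Set V)) (hji : j ≠ i) :
    (attachLeaf H j).neighborSet i = {j} := by
  ext x
  simp only [mem_neighborSet, attachLeaf, sup_adj, map_adj', edge_adj, Subtype.exists]
  grind

lemma attachLeaf_induce (hi : G.neighborSet i = {j}) : attachLeaf (G.induce {i}ᶜ) j = G := by
  have adj_i : ∀ x, G.Adj i x ↔ x = j := fun x ↦ by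
    rw [← mem_neighborSet, hi, Set.mem_singleton_iff]
  have hji : j ≠ i := ((adj_i j).2 rfl).ne'
  ext a b
  simp only [attachLeaf, sup_adj, map_adj', comap_adj, edge_adj, Subtype.exists,
    Function.Embedding.coe_subtype]
  grind [adj_comm, Adj.ne]

def IsTreeWithDegrees (G : SimpleGraph V) (d : V → ℕ) : Prop :=
  G.IsTree ∧ ∀ v, (G.neighborSet v).ncard = d v

lemma isTreeWithDegrees_iff_induce_compl_singleton [Finite V] [DecidableEq V] {d : V → ℕ}
    (hi : G.neighborSet i = {j}) (hdi : d i = 1) (hdj : 1 ≤ d j) :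
    G.IsTreeWithDegrees d ↔
      (G.induce {i}ᶜ).IsTreeWithDegrees fun v ↦ Function.update d j (d j - 1) v :=
  and_congr (isTree_iff_induce_compl_singleton hi)
    (forall_ncard_neighborSet_iff_induce_compl_singleton hi hdi hdj)

lemma sum_ncard_neighborSet_of_isTree [Fintype V] (hG : G.IsTree) :
    ∑ v, (G.neighborSet v).ncard = 2 * (Fintype.card V - 1) := by
  classical
  simp_rw [← Nat.card_coe_set_eq, Nat.card_eq_fintype_card, card_neighborSet_eq_degree]
  have := hG.card_edgeFinset
  rw [sum_degrees_eq_twice_card_edges]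
  omega

lemma card_isTreeWithDegrees_eq_zero_of_sum_ne [Fintype V] {d : V → ℕ}
    (h : ∑ v, d v ≠ 2 * (Fintype.card V - 1)) :
    Nat.card {G : SimpleGraph V // G.IsTreeWithDegrees d} = 0 := by
  have : IsEmpty {G : SimpleGraph V // G.IsTreeWithDegrees d} := ⟨fun G ↦ h <| by
    simp_rw [← G.2.2]
    exact sum_ncard_neighborSet_of_isTree G.2.1⟩
  exact Nat.card_of_isEmpty

lemma card_isTreeWithDegrees_eq_zero [Finite V] [Nontrivial V] {d : V → ℕ} {v : V}
    (hv : d v = 0) : Nat.card {G : SimpleGraph V // G.IsTreeWithDegrees d} = 0 := by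
  have : IsEmpty {G : SimpleGraph V // G.IsTreeWithDegrees d} := ⟨fun G ↦ by
    have := G.2.2 v
    have := (Set.ncard_pos (Set.toFinite _)).2
      ((neighborSet_nonempty _).2 (G.2.1.connected.preconnected.not_isIsolated v))
    omega⟩
  exact Nat.card_of_isEmpty

lemma card_isTreeWithDegrees_of_card_eq_two [Fintype V] (hV : Fintype.card V = 2) {d : V → ℕ}
    (hd : ∀ v, d v = 1) : Nat.card {G : SimpleGraph V // G.IsTreeWithDegrees d} = 1 := by
  have : Nonempty V := Fintype.card_pos_iff.1 (by omega)
  have ncard_compl : ∀ v : V, ({v}ᶜ : Set V).ncard = d v := fun v ↦ by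
    rw [Set.ncard_compl, Set.ncard_singleton, Nat.card_eq_fintype_card, hV, hd]
  refine Nat.card_eq_one_iff_exists.2
    ⟨⟨⊤, ⟨connected_top, .of_card_le_two ?_⟩, fun v ↦ ?_⟩, fun G ↦ Subtype.ext ?_⟩
  · simp [ENat.card_eq_coe_fintype_card, hV]
  · rw [neighborSet_top, ncard_compl]
  · have complete : ∀ v, G.1.neighborSet v = {v}ᶜ := fun v ↦
      Set.eq_of_subset_of_ncard_le (fun w hw ↦ (G.1.ne_of_adj hw).symm)
        (by rw [ncard_compl, G.2.2])
    ext u w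
    rw [top_adj, ← mem_neighborSet, complete, Set.mem_compl_singleton_iff, ne_comm]

lemma card_isTreeWithDegrees_eq_sum_card_and_adj [Fintype V] [DecidableEq V] {d : V → ℕ}
    (hdi : d i = 1) :
    Nat.card {G : SimpleGraph V // G.IsTreeWithDegrees d} =
      ∑ j, Nat.card {G : SimpleGraph V // G.IsTreeWithDegrees d ∧ G.Adj i j} :=
  Nat.card_eq_sum_card_of_existsUnique fun G hG ↦ by
    obtain ⟨j, hj⟩ := Set.ncard_eq_one.1 ((hG.2 i).trans hdi)
    simp_rw [← mem_neighborSet, hj, Set.mem_singleton_iff]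
    exact existsUnique_eq

lemma card_isTreeWithDegrees_and_adj [Finite V] [DecidableEq V] {d : V → ℕ} (hdi : d i = 1)
    (hji : j ≠ i) (hdj : 1 ≤ d j) :
    Nat.card {G : SimpleGraph V // G.IsTreeWithDegrees d ∧ G.Adj i j} =
      Nat.card {H : SimpleGraph ({i}ᶜ : Set V) //
        H.IsTreeWithDegrees fun v ↦ Function.update d j (d j - 1) v} := by
  have leaf : ∀ G : {G : SimpleGraph V // G.IsTreeWithDegrees d ∧ G.Adj i j},
      G.1.neighborSet i = {j} := fun G ↦
    Set.eq_singleton_of_ncard_eq_one ((G.2.1.2 i).trans hdi) G.2.2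
  exact Nat.card_congr
    { toFun G := ⟨G.1.induce {i}ᶜ,
        (isTreeWithDegrees_iff_induce_compl_singleton (leaf G) hdi hdj).1 G.2.1⟩
      invFun H := ⟨attachLeaf H.1 j,
        (isTreeWithDegrees_iff_induce_compl_singleton (neighborSet_attachLeaf H.1 hji) hdi hdj).2
          (by rw [induce_attachLeaf]; exact H.2),
        by rw [← mem_neighborSet, neighborSet_attachLeaf H.1 hji]; rfl⟩
      left_inv G := Subtype.ext (attachLeaf_induce (leaf G))
      right_inv H := Subtype.ext (induce_attachLeaf H.1 j) }

theorem card_isTreeWithDegrees_mul_prod_factorial [Fintype V] [DecidableEq V] {d : V → ℕ}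
    (hV : 2 ≤ Fintype.card V) (hd : ∀ v, 1 ≤ d v)
    (hsum : ∑ v, d v = 2 * (Fintype.card V - 1)) :
    Nat.card {G : SimpleGraph V // G.IsTreeWithDegrees d} * ∏ v, (d v - 1)! =
      (Fintype.card V - 2)! := by
  obtain ⟨n, hn⟩ := Nat.exists_eq_add_of_le' hV
  induction n generalizing V with
  | zero =>
    have hd1 : ∀ v, d v = 1 := fun v ↦ ((Finset.sum_eq_sum_iff_of_le fun v _ ↦ hd v).1
      (by simp [hsum, hn]) v (mem_univ v)).symm
    simp [card_isTreeWithDegrees_of_card_eq_two hn hd1, hd1, hn]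
  | succ n ih =>
    obtain ⟨i, hi⟩ := exists_eq_one_of_sum_lt hd (by omega)
    have hcard : Fintype.card ({i}ᶜ : Set V) = n + 2 := by
      rw [Fintype.card_compl_set, Set.card_singleton, hn]; rfl
    have fiber : ∀ j, Nat.card {G : SimpleGraph V // G.IsTreeWithDegrees d ∧ G.Adj i j} *
        ∏ v, (d v - 1)! = (d j - 1) * n ! := by
      intro j
      rcases eq_or_ne j i with rfl | hji
      · simp [hi]
      rw [card_isTreeWithDegrees_and_adj hi hji (hd j)]
      rcases (hd j).eq_or_lt with hdj | hdj
      · have : Nontrivial ({i}ᶜ : Set V) := Fintype.one_lt_card_iff_nontrivial.1 (by omega)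
        rw [card_isTreeWithDegrees_eq_zero (v := ⟨j, hji⟩) (by simp [← hdj]), ← hdj]
        simp
      have hsum' := sum_compl_singleton_update_pred_add_two hi hji (hd j)
      rw [prod_factorial_eq_mul_prod_compl_singleton_update_pred hi hji hdj, mul_left_comm,
        ih (d := fun v : ({i}ᶜ : Set V) ↦ Function.update d j (d j - 1) v) (by omega)
          (fun v ↦ one_le_update_pred hd hdj v) (by omega) hcard, hcard,
        Nat.add_sub_cancel]
    rw [card_isTreeWithDegrees_eq_sum_card_and_adj hi, Finset.sum_mul,
      Finset.sum_congr rfl fun j _ ↦ fiber j, ← Finset.sum_mul, sum_tsub_one hd, hsum, hn,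
      show 2 * (n + 1 + 2 - 1) - (n + 1 + 2) = n + 1 by omega, Nat.add_sub_cancel,
      factorial_succ]

end SimpleGraph

/-- Moon's theorem on labeled trees with prescribed degrees: for `m ≥ 2` and positive
integers `d₁, …, d_m`, the number of trees on the vertex set `{1, …, m}` in which
vertex `i` has degree `d i` is the multinomial coefficient
`(m−2)!/((d₁−1)!⋯(d_m−1)!)` if `∑ d i = 2(m−1)`, and `0` otherwise. -/
theorem moon_tree_degree_count (m : ℕ) (hm : 2 ≤ m) (d : Fin m → ℕ)
    (hd : ∀ i, 1 ≤ d i) :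
    Nat.card {G : SimpleGraph (Fin m) // G.IsTree ∧ ∀ v, (G.neighborSet v).ncard = d v} =
      if ∑ i, d i = 2 * (m - 1) then
        (m - 2).factorial / ∏ i, (d i - 1).factorial
      else 0 := by
  split_ifs with hsum
  · have key := SimpleGraph.card_isTreeWithDegrees_mul_prod_factorial (V := Fin m)
      (by simpa) hd (by simpa using hsum)
    rw [Fintype.card_fin] at key
    exact (Nat.div_eq_of_eq_mul_left (by positivity) key.symm).symm
  · exact SimpleGraph.card_isTreeWithDegrees_eq_zero_of_sum_ne (by simpa using hsum)
end

section
/- (Cycle lemma of Dvoretzky–Motzkin–Raney.) Let n and k be positive integers and let a_1, a_2, …, a_n be integers, each greater than or equal to −1, with a_1 + a_2 + ⋯ + a_n = −k. Then there are exactly k indices i with 1 ≤ i ≤ n such that the cyclic rotation a_i, a_{i+1}, …, a_n, a_1, …, a_{i−1} has all of its partial sums negative, i.e., the sum of the first t terms of the rotated sequence is negative for every t with 1 ≤ t ≤ n. -/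
/-!
Extend `a` periodically and let `S m` be its `m`-th partial sum. Then `S` goes down by at most
one per step and `S (m + n) = S m - k`, and the rotation starting at `i` is good exactly when
`S m < S i` for every `m > i`. Such indices carry distinct values, and since `S` cannot skip a
value on its way down to `-∞`, the last index where `S ≥ v` is one of them with value exactly `v`.
Shifting an index by `n` lowers its value by `k`, so `i ↦ S i mod k` is a bijection from the good
indices in `[0, n)` onto `ZMod k`.
-/

open Finset

theorem Function.Periodic.sum_range_add_period {M : Type*} [AddCommMonoid M] {f : ℕ → M}
    {n : ℕ} (hf : Function.Periodic f n) (m : ℕ) :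
    ∑ j ∈ range (m + n), f j = ∑ j ∈ range m, f j + ∑ j ∈ range n, f j := by
  induction m with
  | zero => simp
  | succ m ih =>
    rw [Nat.add_right_comm, sum_range_succ, ih, sum_range_succ, hf, add_right_comm]

def IsStrictSuffixMax (S : ℕ → ℤ) (i : ℕ) : Prop :=
  ∀ m, i < m → S m < S i

theorem IsStrictSuffixMax.eq_of_apply_eq {S : ℕ → ℤ} {i j : ℕ} (hi : IsStrictSuffixMax S i)
    (hj : IsStrictSuffixMax S j) (h : S i = S j) : i = j := by
  by_contra hne
  rcases Nat.lt_or_gt_of_ne hne with hij | hji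
  · exact (hi j hij).ne h.symm
  · exact (hj i hji).ne h

section DriftingSequence

variable {S : ℕ → ℤ} {n k : ℕ}

theorem apply_add_mul_eq_sub_mul (hper : ∀ m, S (m + n) = S m - k) (m q : ℕ) :
    S (m + q * n) = S m - q * k := by
  induction q with
  | zero => simp
  | succ q ih =>
    rw [Nat.succ_mul, ← Nat.add_assoc, hper, ih]
    push_cast
    ring

theorem isStrictSuffixMax_add_mul_iff (hper : ∀ m, S (m + n) = S m - k) (i q : ℕ) :
    IsStrictSuffixMax S (i + q * n) ↔ IsStrictSuffixMax S i := by
  have hshift := apply_add_mul_eq_sub_mul hper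
  constructor
  · intro h m hm
    have := h (m + q * n) (by omega)
    rw [hshift, hshift] at this
    omega
  · intro h m hm
    have hback := hshift (m - q * n) q
    rw [Nat.sub_add_cancel (by omega)] at hback
    have := h (m - q * n) (by omega)
    rw [hshift]
    omega

theorem isStrictSuffixMax_iff_forall_le_period (hn : 0 < n) (hper : ∀ m, S (m + n) = S m - k)
    (i : ℕ) : IsStrictSuffixMax S i ↔ ∀ t, 1 ≤ t → t ≤ n → S (i + t) < S i := by
  refine ⟨fun h t ht _ => h (i + t) (by omega), fun h m hm => ?_⟩
  -- write `m - i - 1 = q * n + r` with `r < n`, so that `m = (i + (r + 1)) + q * n`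
  have hm : m = i + ((m - i - 1) % n + 1) + (m - i - 1) / n * n := by
    have := Nat.mod_add_div' (m - i - 1) n
    omega
  have hwindow := h ((m - i - 1) % n + 1) (by omega) (Nat.mod_lt _ hn)
  rw [hm, apply_add_mul_eq_sub_mul hper]
  have : (0 : ℤ) ≤ ((m - i - 1) / n : ℕ) * k := by positivity
  omega

theorem exists_forall_lt_of_apply_add_eq_sub (hn : 0 < n) (hk : 0 < k)
    (hper : ∀ m, S (m + n) = S m - k) (v : ℤ) : ∃ N, ∀ m, N ≤ m → S m < v := by
  obtain ⟨C, hC⟩ := ((range n).image S).exists_le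
  refine ⟨(C - v + 1).toNat * n, fun m hm => ?_⟩
  have hdecomp : S m = S (m % n) - (m / n : ℕ) * k := by
    rw [← apply_add_mul_eq_sub_mul hper, Nat.mod_add_div']
  have hbound : S (m % n) ≤ C := hC _ (mem_image_of_mem S (mem_range.2 (Nat.mod_lt m hn)))
  have hq : (C - v + 1).toNat ≤ m / n := (Nat.le_div_iff_mul_le hn).2 hm
  have : ((m / n : ℕ) : ℤ) ≤ (m / n : ℕ) * k := le_mul_of_one_le_right (by positivity) (by omega)
  omega

theorem exists_isStrictSuffixMax_apply_eq (hstep : ∀ m, S m - 1 ≤ S (m + 1))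
    {v : ℤ} (hN : ∃ N, ∀ m, N ≤ m → S m < v) {j : ℕ} (hj : v ≤ S j) :
    ∃ i, IsStrictSuffixMax S i ∧ S i = v := by
  obtain ⟨N, hN⟩ := hN
  have hjN : j ≤ N := by
    by_contra h
    exact (hN j (by omega)).not_ge hj
  set i := Nat.findGreatest (fun m => v ≤ S m) N
  have hvi : v ≤ S i := Nat.findGreatest_spec (P := fun m => v ≤ S m) hjN hj
  have hlater : ∀ m, i < m → S m < v := by
    intro m hm
    by_cases hmN : m ≤ N
    · exact not_le.1 (Nat.findGreatest_is_greatest (P := fun m => v ≤ S m) hm hmN)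
    · exact hN m (by omega)
  refine ⟨i, fun m hm => (hlater m hm).trans_le hvi, ?_⟩
  have := hlater (i + 1) (by omega)
  have := hstep i
  omega

theorem eq_of_isStrictSuffixMax_of_apply_eq_add (hper : ∀ m, S (m + n) = S m - k) {i j q : ℕ}
    (hi : IsStrictSuffixMax S i) (hj : IsStrictSuffixMax S j) (hin : i < n)
    (h : S j = S i + q * k) : i = j := by
  have hij : i = j + q * n := by
    refine hi.eq_of_apply_eq ((isStrictSuffixMax_add_mul_iff hper j q).2 hj) ?_
    rw [apply_add_mul_eq_sub_mul hper, h]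
    ring
  rcases q with _ | q
  · simpa using hij
  · have : n ≤ (q + 1) * n := Nat.le_mul_of_pos_left n q.succ_pos
    omega

theorem ncard_setOf_isStrictSuffixMax (hn : 0 < n) (hk : 0 < k)
    (hstep : ∀ m, S m - 1 ≤ S (m + 1)) (hper : ∀ m, S (m + n) = S m - k) :
    {i : Fin n | IsStrictSuffixMax S i}.ncard = k := by
  have : NeZero k := ⟨hk.ne'⟩
  set f : Fin n → ZMod k := fun i => (S i : ZMod k)
  have hinj : Set.InjOn f {i | IsStrictSuffixMax S i} := by
    intro i hi j hj hij
    obtain ⟨q, hq⟩ := (ZMod.intCast_eq_intCast_iff_dvd_sub _ _ _).1 hij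
    refine Fin.ext ?_
    rcases Int.eq_nat_or_neg q with ⟨q, rfl | rfl⟩
    · exact eq_of_isStrictSuffixMax_of_apply_eq_add hper hi hj i.isLt (q := q) (by linarith)
    · exact (eq_of_isStrictSuffixMax_of_apply_eq_add hper hj hi j.isLt (q := q)
        (by linarith)).symm
  have hsurj : f '' {i | IsStrictSuffixMax S i} = Set.univ := by
    refine Set.eq_univ_of_forall fun c => ?_
    -- a value `v ≤ S 0` in the residue class `c`
    set v := S 0 - (S 0 - c.val) % k with hv
    obtain ⟨m, hm, hmv⟩ := exists_isStrictSuffixMax_apply_eq hstep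
      (exists_forall_lt_of_apply_add_eq_sub hn hk hper v) (j := 0)
      (by have := Int.emod_nonneg (S 0 - c.val) (by omega : (k : ℤ) ≠ 0); omega)
    have hdecomp := apply_add_mul_eq_sub_mul hper (m % n) (m / n)
    rw [Nat.mod_add_div'] at hdecomp
    refine ⟨⟨m % n, Nat.mod_lt m hn⟩, ?_, ?_⟩
    · rw [Set.mem_ofPred_eq, ← isStrictSuffixMax_add_mul_iff hper _ (m / n), Nat.mod_add_div']
      exact hm
    · have : S (m % n) = v + (m / n : ℕ) * k := by omega
      simp only [f, this, hv]
      push_cast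
      simp
  rw [← hinj.ncard_image, hsurj, Set.ncard_univ, Nat.card_zmod]

end DriftingSequence

/-- The cycle lemma of Dvoretzky–Motzkin–Raney: if `a₁, …, aₙ` are integers `≥ −1`
with sum `−k < 0`, then there are exactly `k` indices `i` such that the cyclic
rotation starting at `i` has all of its partial sums negative. -/
theorem cycle_lemma (n k : ℕ) (hn : 0 < n) (hk : 0 < k) (a : Fin n → ℤ)
    (ha : ∀ i, -1 ≤ a i) (hsum : ∑ i, a i = -(k : ℤ)) :
    {i : Fin n | ∀ t : ℕ, 1 ≤ t → t ≤ n →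
        (∑ s ∈ Finset.range t, a ⟨((i : ℕ) + s) % n, Nat.mod_lt _ hn⟩) < 0}.ncard = k := by
  set f : ℕ → ℤ := fun j => a ⟨j % n, Nat.mod_lt _ hn⟩
  set S : ℕ → ℤ := fun m => ∑ j ∈ range m, f j
  have hwindow (i t : ℕ) : ∑ s ∈ range t, f (i + s) = S (i + t) - S i := by
    simp only [S, sum_range_add, add_sub_cancel_left]
  have hstep (m : ℕ) : S m - 1 ≤ S (m + 1) := by
    simp only [S, sum_range_succ]
    linarith [ha ⟨m % n, Nat.mod_lt _ hn⟩]
  have hperiod : ∑ j ∈ range n, f j = -k := by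
    rw [← hsum, ← Fin.sum_univ_eq_sum_range f]
    exact sum_congr rfl fun i _ => congrArg a (Fin.ext (Nat.mod_eq_of_lt i.isLt))
  have hper (m : ℕ) : S (m + n) = S m - k := by
    have hf : Function.Periodic f n := fun j => by simp [f]
    simp only [S, hf.sum_range_add_period, hperiod, sub_eq_add_neg]
  convert ncard_setOf_isStrictSuffixMax hn hk hstep hper using 2
  refine Set.ext fun i => ?_
  rw [Set.mem_ofPred_eq, Set.mem_ofPred_eq, isStrictSuffixMax_iff_forall_le_period hn hper]
  exact forall₃_congr fun t _ _ => by
    rw [← sub_neg (a := S _), ← hwindow]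
end
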